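/- arXiv:2308.14961 — 14 statements merged into one kernel-verified Lean document; each statement's English description precedes it below -/
import Mathlib

section
/- Let p be a prime, l ≥ 1, and q = p^l. For any α, β ∈ F_{q^2}, the number of distinct roots t ∈ F_{q^2} of the polynomial p_{α,β}(t) = t^{q+1} + α^q·t^q + α·t + (β + β^q) is either 1 or q+1. Equivalently, every non-horizontal line L_{α,β}(t) = (αt+β, t) intersects the Hermitian curve x^q + x + y^{q+1} = 0 over F_{q^2} in either 1 or q+1 points. -/
/-- Every non-horizontal line meets the Hermitian curve in either 1 or `q+1` points:
the polynomial `p_{α,β}(t) = t^(q+1) + α^q t^q + α t + (β + β^q)` has either exactly one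
or exactly `q+1` roots in `F_{q^2}`. -/
theorem hermitian_line_intersection (p l q : ℕ) (hp : p.Prime) (hl : 1 ≤ l) (hq : q = p ^ l)
    (F : Type*) [Field F] [Fintype F] (hF : Fintype.card F = q ^ 2) (α β : F) :
    Nat.card {t : F // t ^ (q + 1) + α ^ q * t ^ q + α * t + (β + β ^ q) = 0} = 1 ∨
    Nat.card {t : F // t ^ (q + 1) + α ^ q * t ^ q + α * t + (β + β ^ q) = 0} = q + 1 := by
  classical
  -- basic numerics
  have hq2 : 2 ≤ q := by
    rw [hq]; calc 2 ≤ p := hp.two_le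
    _ ≤ p ^ l := Nat.le_self_pow (by omega) p
  have hfact : q ^ 2 - 1 = (q + 1) * (q - 1) := by
    obtain ⟨m, rfl⟩ : ∃ m, q = m + 2 := ⟨q - 2, by omega⟩
    have e : m + 2 - 1 = m + 1 := by omega
    have h2 : (m + 2) ^ 2 = (m + 2 + 1) * (m + 1) + 1 := by ring
    rw [e]
    omega
  -- characteristic
  have hcard : Fintype.card F = p ^ (2 * l) := by
    rw [hF, hq, ← pow_mul, mul_comm]
  haveI hcharP : CharP F p := by
    have h1 : CharP F (ringChar F) := ringChar.charP F
    obtain ⟨n, hn, hFn⟩ := FiniteField.card F (ringChar F)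
    have : ringChar F = p := by
      have hd : ringChar F ∣ p ^ (2 * l) := by
        rw [← hcard, hFn]; exact dvd_pow_self _ (by positivity)
      exact ((Nat.prime_dvd_prime_iff_eq hn hp).mp (hn.dvd_of_dvd_pow hd))
    rwa [this] at h1
  haveI : Fact p.Prime := ⟨hp⟩
  -- Frobenius facts
  have hpow : ∀ x : F, (x ^ q) ^ q = x := by
    intro x
    rw [← pow_mul, ← sq]
    have := FiniteField.pow_card x
    rwa [hF] at this
  have hfrob : ∀ x y : F, (x + y) ^ q = x ^ q + y ^ q := by
    intro x y; rw [hq]; exact add_pow_char_pow x y p l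
  -- the key constant
  set d : F := α ^ (q + 1) - (β + β ^ q) with hd_def
  -- rewrite the defining polynomial
  have key : ∀ t : F,
      t ^ (q + 1) + α ^ q * t ^ q + α * t + (β + β ^ q) = (t + α ^ q) ^ (q + 1) - d := by
    intro t
    have h1 : (t + α ^ q) ^ q = t ^ q + α := by rw [hfrob, hpow]
    have h2 : (t + α ^ q) ^ (q + 1) = (t + α ^ q) ^ q * (t + α ^ q) := by
      rw [pow_succ]
    rw [h2, h1, hd_def]
    ring
  -- change variables
  have e1 : {t : F // t ^ (q + 1) + α ^ q * t ^ q + α * t + (β + β ^ q) = 0}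
      ≃ {s : F // s ^ (q + 1) = d} := by
    refine (Equiv.addRight (α ^ q)).subtypeEquiv fun t => ?_
    rw [key t, sub_eq_zero, Equiv.coe_addRight]
  rw [Nat.card_congr e1]
  by_cases hd : d = 0
  · left
    have hiff : ∀ s : F, s ^ (q + 1) = d ↔ s = 0 := by
      intro s; rw [hd, pow_eq_zero_iff (Nat.succ_ne_zero q)]
    rw [Nat.card_congr (Equiv.subtypeEquivRight hiff)]
    haveI : Unique {s : F // s = 0} := ⟨⟨⟨0, rfl⟩⟩, fun a => Subtype.ext a.2⟩
    exact Nat.card_unique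
  · right
    -- d is fixed by Frobenius
    have hdq : d ^ q = d := by
      have h1 : (α ^ (q + 1)) ^ q = α ^ (q + 1) := by
        rw [← pow_mul, add_mul, one_mul, pow_add, pow_mul, hpow, pow_succ, mul_comm]
      have h2 : ((β + β ^ q) : F) ^ q = β ^ q + β := by
        rw [hfrob, hpow]
      calc d ^ q = (α ^ (q + 1)) ^ q - ((β + β ^ q)) ^ q := by
            rw [hd_def, hq, sub_pow_char_pow]
        _ = d := by rw [h1, h2, hd_def]; ring
    -- units setup
    have hcardu : Fintype.card Fˣ = q ^ 2 - 1 := by rw [Fintype.card_units, hF]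
    set du : Fˣ := Units.mk0 d hd with hdu_def
    obtain ⟨g, hg⟩ := IsCyclic.exists_generator (α := Fˣ)
    have hgord : orderOf g = q ^ 2 - 1 := by
      rw [orderOf_eq_card_of_forall_mem_zpowers hg, Nat.card_eq_fintype_card, hcardu]
    -- find a (q+1)-st root of d
    obtain ⟨k, hk⟩ : ∃ k : ℕ, g ^ k = du := mem_powers_iff_mem_zpowers.mpr (hg du)
    have hduq : du ^ (q - 1) = 1 := by
      have hduq' : du ^ q = du := by
        ext; rw [Units.val_pow_eq_pow_val, hdu_def, Units.val_mk0, hdq]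
      have : du ^ (q - 1) * du = (1 : Fˣ) * du := by
        rw [one_mul, ← pow_succ]
        have : q - 1 + 1 = q := by omega
        rw [this, hduq']
      exact mul_right_cancel this
    have hdvd : (q + 1) * (q - 1) ∣ k * (q - 1) := by
      rw [← hfact, ← hgord]
      apply orderOf_dvd_of_pow_eq_one
      rw [pow_mul, hk, hduq]
    have hq1dvd : (q + 1) ∣ k :=
      (Nat.mul_dvd_mul_iff_right (by omega : 0 < q - 1)).mp hdvd
    obtain ⟨m, hm⟩ := hq1dvd
    have hs0 : ((g ^ m : Fˣ) : F) ^ (q + 1) = d := by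
      have : (g ^ m) ^ (q + 1) = du := by
        rw [← pow_mul, mul_comm, ← hm, hk]
      have h := congrArg (Units.val) this
      simpa [hdu_def] using h
    -- primitive (q+1)-st root of unity
    have hζdvd : (q + 1) ∣ q ^ 2 - 1 := ⟨q - 1, hfact⟩
    set ζu : Fˣ := g ^ (q - 1) with hζu_def
    have hζord : orderOf ζu = q + 1 := by
      rw [hζu_def, orderOf_pow, hgord, hfact, Nat.gcd_eq_right ⟨q + 1, by ring⟩,
        Nat.mul_div_cancel _ (by omega : 0 < q - 1)]
    have hζ : IsPrimitiveRoot ((ζu : F)) (q + 1) := by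
      rw [IsPrimitiveRoot.coe_units_iff]
      exact hζord ▸ IsPrimitiveRoot.orderOf ζu
    -- count roots
    have hnth := hζ.card_nthRoots d
    rw [if_pos ⟨_, hs0⟩] at hnth
    have hnodup := hζ.nthRoots_nodup hd
    have hiff : ∀ s : F, s ^ (q + 1) = d ↔ s ∈ (Polynomial.nthRoots (q + 1) d).toFinset := by
      intro s
      rw [Multiset.mem_toFinset, Polynomial.mem_nthRoots (Nat.succ_pos q)]
    rw [Nat.card_congr (Equiv.subtypeEquivRight hiff), Nat.card_eq_finsetCard,
      Multiset.toFinset_card_of_nodup hnodup, hnth]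
end

section
/- Let p be a prime, l ≥ 1, and q = p^l. The number of affine points of the Hermitian curve over F_{q^2} is exactly q^3, i.e., the cardinality of {(x,y) ∈ F_{q^2} × F_{q^2} : x^q + x + y^{q+1} = 0} is q^3. -/
set_option maxHeartbeats 1000000

open Finset Polynomial

private lemma fiber_card_eq' {F : Type*} [AddCommGroup F] [Fintype F] [DecidableEq F]
    (g : F →+ F) (c x₀ : F) (h : g x₀ = c) :
    #(univ.filter fun x => g x = c) = #(univ.filter fun x => g x = 0) := by
  apply Finset.card_bij' (fun x _ => x - x₀) (fun x _ => x + x₀)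
  · intro a ha
    simp only [mem_filter, mem_univ, true_and] at *
    rw [map_sub, ha, h, sub_self]
  · intro a ha
    simp only [mem_filter, mem_univ, true_and] at *
    rw [map_add, ha, h, zero_add]
  · intros; simp
  · intros; simp

private lemma card_root_le' {F : Type*} [Field F] [Fintype F] [DecidableEq F] (P : Polynomial F)
    (hP : P ≠ 0) :
    #(univ.filter fun x => P.eval x = 0) ≤ P.natDegree := by
  calc #(univ.filter fun x => P.eval x = 0) ≤ #P.roots.toFinset := by
        apply Finset.card_le_card
        intro x hx
        simp only [mem_filter, mem_univ, true_and] at hx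
        simp [Multiset.mem_toFinset, mem_roots, hP, IsRoot, hx]
    _ ≤ Multiset.card P.roots := Multiset.toFinset_card_le _
    _ ≤ P.natDegree := P.card_roots' 

/-- The Hermitian curve `x^q + x + y^(q+1) = 0` has exactly `q^3` affine points
over `F_{q^2}`. -/
theorem hermitian_curve_point_count (p l q : ℕ) (hp : p.Prime) (hl : 1 ≤ l) (hq : q = p ^ l)
    (F : Type*) [Field F] [Fintype F] (hF : Fintype.card F = q ^ 2) :
    Nat.card {pt : F × F // pt.1 ^ q + pt.1 + pt.2 ^ (q + 1) = 0} = q ^ 3 := by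
  classical
  have hq2 : 2 ≤ q := by
    rw [hq]
    calc 2 ≤ p := hp.two_le
    _ = p ^ 1 := (pow_one p).symm
    _ ≤ p ^ l := Nat.pow_le_pow_right hp.pos hl
  have hq0 : 0 < q := by omega
  have hq1 : q ≠ 1 := by omega
  -- characteristic
  haveI : CharP F p := by
    have h1 : (ringChar F).Prime := CharP.char_is_prime F (ringChar F)
    obtain ⟨n, -, hcard⟩ := FiniteField.card F (ringChar F)
    have hdvd : p ∣ ringChar F ^ (n : ℕ) := by
      rw [← hcard, hF, hq]
      exact dvd_pow (dvd_pow_self p (by omega)) (by norm_num)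
    have : p = ringChar F := ((Nat.prime_dvd_prime_iff_eq hp h1).mp
      (hp.dvd_of_dvd_pow hdvd))
    rw [this]; exact ringChar.charP F
  haveI : ExpChar F p := ExpChar.prime hp
  set φ := iterateFrobenius F p l with hφ
  have hφx : ∀ x : F, φ x = x ^ q := by
    intro x; rw [iterateFrobenius_def, hq]
  -- the additive map g x = x^q + x
  set g : F →+ F := φ.toAddMonoidHom + AddMonoidHom.id F with hg
  have hgx : ∀ x : F, g x = x ^ q + x := by
    intro x; simp [hg, hφx]
  -- x^(q^2) = x
  have hxq2 : ∀ x : F, (x ^ q) ^ q = x := by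
    intro x
    rw [← pow_mul, ← sq, ← hF]
    exact FiniteField.pow_card x
  -- kernel
  set K := univ.filter (fun x : F => g x = 0) with hK
  have hKle : #K ≤ q := by
    have := card_root_le' (F := F) (X ^ q + X) ?_
    · refine le_trans (le_of_eq ?_) (le_trans this ?_)
      · congr 1; ext x; simp [hgx, hK]
      · calc (X ^ q + X : F[X]).natDegree ≤ max (X ^ q : F[X]).natDegree (X : F[X]).natDegree :=
            natDegree_add_le _ _
        _ ≤ q := by rw [natDegree_X_pow, natDegree_X]; omega
    · intro h
      have : ((X ^ q + X : F[X])).coeff q = 0 := by rw [h]; simp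
      rw [coeff_add, coeff_X_pow, coeff_X] at this
      simp [hq1.symm, if_neg] at this
  -- the set S of fixed points of Frobenius
  set S := univ.filter (fun c : F => c ^ q = c) with hS
  have hSle : #S ≤ q := by
    have := card_root_le' (F := F) (X ^ q - X) ?_
    · refine le_trans (le_of_eq ?_) (le_trans this ?_)
      · congr 1; ext x; simp [hS, sub_eq_zero]
      · calc (X ^ q - X : F[X]).natDegree ≤ max (X ^ q : F[X]).natDegree (X : F[X]).natDegree :=
            natDegree_sub_le _ _
        _ ≤ q := by rw [natDegree_X_pow, natDegree_X]; omega
    · intro h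
      have : ((X ^ q - X : F[X])).coeff q = 0 := by rw [h]; simp
      rw [coeff_sub, coeff_X_pow, coeff_X] at this
      simp [hq1.symm, if_neg] at this
  -- image
  set I := univ.image (fun x : F => g x) with hI
  have hIS : I ⊆ S := by
    intro c hc
    rw [hI, mem_image] at hc
    obtain ⟨x, -, rfl⟩ := hc
    rw [hS, mem_filter]
    refine ⟨mem_univ _, ?_⟩
    rw [hgx]
    have : (x ^ q + x) ^ q = (x ^ q) ^ q + x ^ q := by
      rw [← hφx, ← hφx, ← hφx, map_add]
    rw [this, hxq2, add_comm]
  have hcardprod : #I * #K = q ^ 2 := by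
    have h1 : #(univ : Finset F) = ∑ c ∈ I, #(univ.filter fun x : F => g x = c) :=
      card_eq_sum_card_fiberwise (fun x _ => mem_image_of_mem _ (mem_univ x))
    have h2 : ∀ c ∈ I, #(univ.filter fun x : F => g x = c) = #K := by
      intro c hc
      rw [hI, mem_image] at hc
      obtain ⟨x₀, -, hx₀⟩ := hc
      exact fiber_card_eq' g c x₀ hx₀
    rw [Finset.sum_congr rfl h2, Finset.sum_const, smul_eq_mul] at h1
    rw [← h1, ← hF, Finset.card_univ]
  have hKq : #K = q := by
    have hIle : #I ≤ q := le_trans (card_le_card hIS) hSle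
    nlinarith [hKle, hIle, hcardprod]
  have hIq : #I = q := by nlinarith [hKle, hcardprod, hKq]
  have hIeqS : I = S := eq_of_subset_of_card_le hIS (by omega)
  -- every -(y^(q+1)) lies in S hence in I
  have hfib : ∀ y : F, #(univ.filter fun x : F => x ^ q + x + y ^ (q+1) = 0) = q := by
    intro y
    have hmem : -(y ^ (q+1)) ∈ S := by
      rw [hS, mem_filter]
      refine ⟨mem_univ _, ?_⟩
      have hneg : ∀ a : F, (-a) ^ q = -(a ^ q) := by
        intro a; rw [← hφx, ← hφx, map_neg]
      rw [hneg]
      congr 1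
      rw [← pow_mul, add_mul, one_mul, pow_add, pow_mul, hxq2 y, pow_add, pow_one, mul_comm]
    rw [← hIeqS, hI, mem_image] at hmem
    obtain ⟨x₀, -, hx₀⟩ := hmem
    have := fiber_card_eq' g _ x₀ hx₀
    calc #(univ.filter fun x : F => x ^ q + x + y ^ (q+1) = 0)
        = #(univ.filter fun x : F => g x = -(y ^ (q+1))) := by
          congr 1; ext x
          simp only [mem_filter, mem_univ, true_and, hgx]
          constructor <;> intro h <;> linear_combination h
      _ = #K := this
      _ = q := hKq
  -- final count
  have e : {pt : F × F // pt.1 ^ q + pt.1 + pt.2 ^ (q + 1) = 0} ≃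
      Σ y : F, {x : F // x ^ q + x + y ^ (q+1) = 0} :=
    { toFun := fun pt => ⟨pt.1.2, pt.1.1, pt.2⟩
      invFun := fun s => ⟨(s.2.1, s.1), s.2.2⟩
      left_inv := fun pt => rfl
      right_inv := fun s => rfl }
  rw [Nat.card_eq_fintype_card, Fintype.card_congr e, Fintype.card_sigma]
  have : ∀ y : F, Fintype.card {x : F // x ^ q + x + y ^ (q+1) = 0} = q := by
    intro y
    rw [Fintype.card_subtype]
    exact hfib y
  rw [Finset.sum_congr rfl (fun y _ => this y), Finset.sum_const, smul_eq_mul, card_univ, hF]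
  ring
end

section
/- Let p be a prime, l ≥ 1, and q = p^l. Let f and f' be two bivariate polynomials over F_{q^2}, each an F_{q^2}-linear combination of monomials x^a y^b with 0 ≤ b ≤ q−1 and aq + b(q+1) ≤ q^2 − 1. Let α, β ∈ F_{q^2} be such that p_{α,β}(t) = t^{q+1} + α^q·t^q + α·t + (β + β^q) has q+1 distinct roots t_0, t_1, …, t_q in F_{q^2}. If f(αt_i+β, t_i) = f'(αt_i+β, t_i) for i = 1, …, q, then also f(αt_0+β, t_0) = f'(αt_0+β, t_0). (This expresses that the Hermitian one-point code C_{q,q^2−1} has locality q with the q^2−1 secant lines through each point giving disjoint recovery sets.) -/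
open MvPolynomial

lemma eval_aeval_line {F : Type*} [CommSemiring F] (v : Fin 2 → Polynomial F) (s : F)
    (f : MvPolynomial (Fin 2) F) :
    Polynomial.eval s (MvPolynomial.aeval v f) =
      MvPolynomial.eval (fun i => Polynomial.eval s (v i)) f := by
  induction f using MvPolynomial.induction_on with
  | C a => simp
  | add f g hf hg => simp [hf, hg]
  | mul_X f i hf => simp [hf]


lemma aux_deg {F : Type*} [Field F] (q : ℕ) (hq2 : 2 ≤ q) (α β : F)
    (g : MvPolynomial (Fin 2) F)
    (hg : g ∈ Submodule.span F
      {m : MvPolynomial (Fin 2) F | ∃ a b : ℕ, b ≤ q - 1 ∧ a * q + b * (q + 1) ≤ q ^ 2 - 1 ∧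
        m = X 0 ^ a * X 1 ^ b}) :
    (MvPolynomial.aeval
      (![Polynomial.C α * Polynomial.X + Polynomial.C β, Polynomial.X] : Fin 2 → Polynomial F)
      g).natDegree ≤ q - 1 := by
  have key : Submodule.span F
      {m : MvPolynomial (Fin 2) F | ∃ a b : ℕ, b ≤ q - 1 ∧ a * q + b * (q + 1) ≤ q ^ 2 - 1 ∧
        m = X 0 ^ a * X 1 ^ b} ≤
      (Polynomial.degreeLE F ((q - 1 : ℕ) : WithBot ℕ)).comap
        (MvPolynomial.aeval
          (![Polynomial.C α * Polynomial.X + Polynomial.C β, Polynomial.X] : Fin 2 → Polynomial F)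
          : MvPolynomial (Fin 2) F →ₐ[F] Polynomial F).toLinearMap := by
    rw [Submodule.span_le]
    rintro m ⟨a, b, hb, hab, rfl⟩
    have hab' : a + b ≤ q - 1 := by
      have h1 : (a + b) * q < q * q := by
        calc (a + b) * q ≤ a * q + b * (q + 1) := by nlinarith
        _ ≤ q ^ 2 - 1 := hab
        _ < q ^ 2 := Nat.sub_lt (by positivity) one_pos
        _ = q * q := sq q
      have h2 : a + b < q := lt_of_mul_lt_mul_right h1 (Nat.zero_le q)
      omega
    have hnd : (MvPolynomial.aeval
        (![Polynomial.C α * Polynomial.X + Polynomial.C β, Polynomial.X] : Fin 2 → Polynomial F)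
        ((X 0 ^ a * X 1 ^ b : MvPolynomial (Fin 2) F))).natDegree ≤ q - 1 := by
      calc (MvPolynomial.aeval
          (![Polynomial.C α * Polynomial.X + Polynomial.C β, Polynomial.X] : Fin 2 → Polynomial F)
          ((X 0 ^ a * X 1 ^ b : MvPolynomial (Fin 2) F))).natDegree
          = ((Polynomial.C α * Polynomial.X + Polynomial.C β) ^ a *
              Polynomial.X ^ b).natDegree := by simp
        _ ≤ ((Polynomial.C α * Polynomial.X + Polynomial.C β) ^ a).natDegree +
              (Polynomial.X ^ b : Polynomial F).natDegree := Polynomial.natDegree_mul_le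
        _ ≤ a * 1 + b := by
            gcongr
            · exact le_trans (Polynomial.natDegree_pow_le)
                (Nat.mul_le_mul_left a Polynomial.natDegree_linear_le)
            · exact le_of_eq (Polynomial.natDegree_X_pow b)
        _ ≤ q - 1 := by omega
    simp only [SetLike.mem_coe, Submodule.mem_comap, AlgHom.toLinearMap_apply, Polynomial.mem_degreeLE]
    exact le_trans (Polynomial.degree_le_natDegree) (Nat.cast_le.mpr hnd)
  have := key hg
  simp only [Submodule.mem_comap, AlgHom.toLinearMap_apply, Polynomial.mem_degreeLE] at this
  exact Polynomial.natDegree_le_iff_degree_le.mpr this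

/-- Local recovery for the Hermitian one-point code `C_{q,q^2-1}`: if two functions in the
span of the monomials `x^a y^b` with `b ≤ q-1` and `aq + b(q+1) ≤ q^2-1` agree at `q` of the
`q+1` points where a secant line meets the Hermitian curve, then they agree at the remaining
point. -/
theorem hermitian_one_point_code_locality (p l q : ℕ) (hp : p.Prime) (hl : 1 ≤ l)
    (hq : q = p ^ l) (F : Type*) [Field F] [Fintype F] (hF : Fintype.card F = q ^ 2)
    (f f' : MvPolynomial (Fin 2) F)
    (hf : f ∈ Submodule.span F
      {m : MvPolynomial (Fin 2) F | ∃ a b : ℕ, b ≤ q - 1 ∧ a * q + b * (q + 1) ≤ q ^ 2 - 1 ∧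
        m = X 0 ^ a * X 1 ^ b})
    (hf' : f' ∈ Submodule.span F
      {m : MvPolynomial (Fin 2) F | ∃ a b : ℕ, b ≤ q - 1 ∧ a * q + b * (q + 1) ≤ q ^ 2 - 1 ∧
        m = X 0 ^ a * X 1 ^ b})
    (α β : F) (t : Fin (q + 1) → F) (htinj : Function.Injective t)
    (htroot : ∀ i, (t i) ^ (q + 1) + α ^ q * (t i) ^ q + α * (t i) + (β + β ^ q) = 0)
    (hagree : ∀ i : Fin (q + 1), i ≠ 0 →
      eval ![α * t i + β, t i] f = eval ![α * t i + β, t i] f') :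
    eval ![α * t 0 + β, t 0] f = eval ![α * t 0 + β, t 0] f' := by
  have hq2 : 2 ≤ q := by
    rw [hq]
    calc 2 = 2 ^ 1 := rfl
    _ ≤ p ^ 1 := Nat.pow_le_pow_left hp.two_le 1
    _ ≤ p ^ l := Nat.pow_le_pow_right hp.pos hl
  set v : Fin 2 → Polynomial F :=
    ![Polynomial.C α * Polynomial.X + Polynomial.C β, Polynomial.X] with hv
  set G : Polynomial F := MvPolynomial.aeval v f - MvPolynomial.aeval v f' with hG
  have hGeval : ∀ i : Fin (q + 1), Polynomial.eval (t i) G =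
      eval ![α * t i + β, t i] f - eval ![α * t i + β, t i] f' := by
    intro i
    have hvals : (fun j => Polynomial.eval (t i) (v j)) = ![α * t i + β, t i] := by
      funext j
      fin_cases j <;> simp [hv]
    rw [hG, Polynomial.eval_sub, eval_aeval_line, eval_aeval_line, hvals]
  have hG0 : G = 0 := by
    have hinj : Function.Injective (fun j : Fin q => t j.succ) := by
      intro a b hab
      exact Fin.succ_injective _ (htinj hab)
    apply Polynomial.eq_zero_of_natDegree_lt_card_of_eval_eq_zero G hinj
    · intro j
      rw [hGeval]
      rw [hagree j.succ (Fin.succ_ne_zero j), sub_self]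
    · rw [Fintype.card_fin]
      have h1 := aux_deg q hq2 α β f hf
      have h2 := aux_deg q hq2 α β f' hf'
      calc G.natDegree
          ≤ max (MvPolynomial.aeval v f).natDegree (MvPolynomial.aeval v f').natDegree :=
            Polynomial.natDegree_sub_le _ _
        _ ≤ q - 1 := max_le h1 h2
        _ < q := by omega
  have h0 := hGeval 0
  rw [hG0, Polynomial.eval_zero] at h0
  exact sub_eq_zero.mp h0.symm
end

section
/- Let p be a prime, l ≥ 1, and q = p^l. For integers a, b, let M_{a,b}(x,y) = x^a y^b. Then the family of functions H_q(F_{q^2}) → F_{q^2} given by (x,y) ↦ x^a y^b, indexed by pairs (a,b) with 0 ≤ a ≤ q−1 and 0 ≤ b ≤ q^2−1, is linearly independent over F_{q^2}; equivalently, the q^3-long evaluation vectors (M_{a,b}(P))_{P ∈ H_q(F_{q^2})} for these pairs (a,b) are linearly independent. -/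
open Polynomial Finset

lemma herm_aux_roots_bound {F : Type*} [Field F] [Fintype F] [DecidableEq F]
    (P : F[X]) (hP : P ≠ 0) :
    (Finset.univ.filter fun x : F => P.eval x = 0).card ≤ P.natDegree := by
  calc (Finset.univ.filter fun x : F => P.eval x = 0).card
      ≤ P.roots.toFinset.card := by
        apply Finset.card_le_card
        intro x hx
        simp only [Finset.mem_filter] at hx
        simp [Multiset.mem_toFinset, Polynomial.mem_roots, hP, hx.2, Polynomial.IsRoot]
    _ ≤ Multiset.card P.roots := Multiset.toFinset_card_le _
    _ ≤ P.natDegree := P.card_roots'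

lemma herm_aux_fiber_card (p l q : ℕ) (hp : p.Prime) (hl : 1 ≤ l) (hq : q = p ^ l)
    (F : Type*) [Field F] [Fintype F] [DecidableEq F] (hF : Fintype.card F = q ^ 2)
    (c : F) (hc : c ^ q = c) :
    q ≤ (Finset.univ.filter fun x : F => x ^ q + x = c).card := by
  have hq2 : 2 ≤ q := by
    rw [hq]
    calc 2 = 2 ^ 1 := (pow_one 2).symm
    _ ≤ p ^ 1 := Nat.pow_le_pow_left hp.two_le 1
    _ ≤ p ^ l := Nat.pow_le_pow_right hp.pos hl
  -- characteristic
  haveI : Fact p.Prime := ⟨hp⟩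
  have hchar : ringChar F = p := by
    have h1 : (Fintype.card F : F) = 0 := FiniteField.cast_card_eq_zero F
    rw [hF, hq] at h1
    have h2 : ringChar F ∣ (p ^ l) ^ 2 := (ringChar.spec F _).mp (by exact_mod_cast h1)
    have h3 : (ringChar F).Prime := CharP.char_is_prime F (ringChar F)
    rw [← pow_mul] at h2
    exact (Nat.prime_dvd_prime_iff_eq h3 hp).mp (h3.dvd_of_dvd_pow h2)
  haveI : CharP F p := hchar ▸ ringChar.charP F
  have hfrob : ∀ x y : F, (x + y) ^ q = x ^ q + y ^ q := by
    intro x y; rw [hq]; exact add_pow_char_pow ..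
  have hpowcard : ∀ x : F, x ^ q ^ 2 = x := by
    intro x; rw [← hF]; exact FiniteField.pow_card x
  -- every x^q + x is a root of X^q = X
  have hmem : ∀ x : F, (x ^ q + x) ^ q = x ^ q + x := by
    intro x
    rw [hfrob, ← pow_mul, ← pow_two, hpowcard, add_comm]
  set R : Finset F := Finset.univ.filter fun z : F => z ^ q = z with hR
  have hcR : c ∈ R := Finset.mem_filter.mpr ⟨Finset.mem_univ c, hc⟩
  -- |R| ≤ q
  have hRq : R.card ≤ q := by
    have hmonic : (X ^ q - X : F[X]).Monic := by
      have := Polynomial.monic_X_pow_add (p := (-X : F[X])) (n := q)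
        (by rw [Polynomial.degree_neg, Polynomial.degree_X]
            exact_mod_cast Nat.lt_of_lt_of_le one_lt_two hq2)
      simpa [sub_eq_add_neg] using this
    have hb := herm_aux_roots_bound (X ^ q - X : F[X]) hmonic.ne_zero
    have hdeg : (X ^ q - X : F[X]).natDegree ≤ q := by
      apply (Polynomial.natDegree_sub_le _ _).trans
      simp only [Polynomial.natDegree_X_pow, Polynomial.natDegree_X]
      omega
    refine le_trans (le_of_eq ?_) (hb.trans hdeg)
    congr 1; ext z; simp [hR, sub_eq_zero]
  -- each fiber has ≤ q elements
  have hfib : ∀ d : F, (Finset.univ.filter fun x : F => x ^ q + x = d).card ≤ q := by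
    intro d
    have hmonic : (X ^ q + (X - C d) : F[X]).Monic := by
      apply Polynomial.monic_X_pow_add
      rw [Polynomial.degree_X_sub_C]
      exact_mod_cast Nat.lt_of_lt_of_le one_lt_two hq2
    have hb := herm_aux_roots_bound _ hmonic.ne_zero
    have hdeg : (X ^ q + (X - C d) : F[X]).natDegree ≤ q := by
      apply (Polynomial.natDegree_add_le _ _).trans
      simp only [Polynomial.natDegree_X_pow]
      exact max_le (le_refl q) ((Polynomial.natDegree_X_sub_C d).le.trans (by omega))
    refine le_trans (le_of_eq ?_) (hb.trans hdeg)
    congr 1; ext x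
    simp [sub_eq_zero, add_sub_assoc, Polynomial.eval_sub]
    constructor
    · intro h; rw [← h]; ring
    · intro h; rw [← sub_eq_zero] at h ⊢; rw [← h]; ring
  -- partition of F by fibers
  have hpart : Fintype.card F = ∑ d ∈ R, (Finset.univ.filter fun x : F => x ^ q + x = d).card := by
    rw [← Finset.card_univ]
    apply Finset.card_eq_sum_card_fiberwise
    intro x _
    exact Finset.mem_filter.mpr ⟨Finset.mem_univ _, hmem x⟩
  by_contra hcon
  push_neg at hcon
  have hsum : ∑ d ∈ R, (Finset.univ.filter fun x : F => x ^ q + x = d).card = q ^ 2 := by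
    rw [← hpart, hF]
  rw [← Finset.add_sum_erase R _ hcR] at hsum
  have herase : ∑ d ∈ R.erase c, (Finset.univ.filter fun x : F => x ^ q + x = d).card
      ≤ (R.erase c).card * q := by
    apply Finset.sum_le_card_nsmul
    intro d _; exact hfib d
  have hec : (R.erase c).card ≤ q - 1 := by
    have := Finset.card_erase_of_mem hcR
    omega
  have : q ^ 2 ≤ (q - 1) + (q - 1) * q := by
    calc q ^ 2 ≤ (q - 1) + (R.erase c).card * q := by omega
    _ ≤ (q - 1) + (q - 1) * q := by
        exact Nat.add_le_add_left (Nat.mul_le_mul_right q hec) _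
  have hid : (q - 1) + (q - 1) * q + 1 = q ^ 2 := by
    obtain ⟨m, rfl⟩ : ∃ m, q = m + 2 := ⟨q - 2, by omega⟩
    have h1 : m + 2 - 1 = m + 1 := by omega
    rw [h1]; ring
  omega

/-- The evaluation vectors of the monomials `x^a y^b` with `0 ≤ a ≤ q-1` and
`0 ≤ b ≤ q^2-1` on the affine points of the Hermitian curve are linearly independent
over `F_{q^2}`. -/
theorem hermitian_monomial_evaluations_linearIndependent (p l q : ℕ) (hp : p.Prime)
    (hl : 1 ≤ l) (hq : q = p ^ l) (F : Type*) [Field F] [Fintype F]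
    (hF : Fintype.card F = q ^ 2) :
    LinearIndependent F
      (fun ab : Fin q × Fin (q ^ 2) =>
        (fun P : {pt : F × F // pt.1 ^ q + pt.1 + pt.2 ^ (q + 1) = 0} =>
          P.1.1 ^ (ab.1 : ℕ) * P.1.2 ^ (ab.2 : ℕ))) := by
  classical
  have hq2 : 2 ≤ q := by
    rw [hq]
    calc 2 = 2 ^ 1 := (pow_one 2).symm
    _ ≤ p ^ 1 := Nat.pow_le_pow_left hp.two_le 1
    _ ≤ p ^ l := Nat.pow_le_pow_right hp.pos hl
  haveI : Fact p.Prime := ⟨hp⟩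
  have hchar : ringChar F = p := by
    have h1 : (Fintype.card F : F) = 0 := FiniteField.cast_card_eq_zero F
    rw [hF, hq] at h1
    have h2 : ringChar F ∣ (p ^ l) ^ 2 := (ringChar.spec F _).mp (by exact_mod_cast h1)
    have h3 : (ringChar F).Prime := CharP.char_is_prime F (ringChar F)
    rw [← pow_mul] at h2
    exact (Nat.prime_dvd_prime_iff_eq h3 hp).mp (h3.dvd_of_dvd_pow h2)
  haveI : CharP F p := hchar ▸ ringChar.charP F
  have hpowcard : ∀ x : F, x ^ q ^ 2 = x := by
    intro x; rw [← hF]; exact FiniteField.pow_card x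
  rw [Fintype.linearIndependent_iff]
  intro g hg ab
  -- pointwise vanishing
  have hpt : ∀ x y : F, x ^ q + x + y ^ (q + 1) = 0 →
      ∑ ab : Fin q × Fin (q ^ 2), g ab * (x ^ (ab.1 : ℕ) * y ^ (ab.2 : ℕ)) = 0 := by
    intro x y hxy
    have := congrFun hg (⟨(x, y), hxy⟩ :
      {pt : F × F // pt.1 ^ q + pt.1 + pt.2 ^ (q + 1) = 0})
    simpa [Finset.sum_apply] using this
  -- the y-polynomials
  set h : Fin q → Polynomial F :=
    fun a => ∑ b : Fin (q ^ 2), Polynomial.monomial (b : ℕ) (g (a, b)) with hdefh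
  -- Step A: for every y, the evaluations vanish
  have stepA : ∀ (y : F) (a : Fin q), (h a).eval y = 0 := by
    intro y a
    set c : F := -(y ^ (q + 1)) with hdefc
    have hc : c ^ q = c := by
      have h0 : (y ^ (q + 1)) ^ q = y ^ (q + 1) := by
        rw [← pow_mul]
        have : (q + 1) * q = q ^ 2 + q := by ring
        rw [this, pow_add, hpowcard, pow_succ, mul_comm]
      calc c ^ q = (0 - y ^ (q + 1)) ^ q := by rw [zero_sub]
      _ = 0 ^ q - (y ^ (q + 1)) ^ q := by
          rw [hq]; exact sub_pow_char_pow ..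
      _ = c := by rw [zero_pow (by omega), h0, zero_sub]
    set φ : Polynomial F :=
      ∑ a' : Fin q, Polynomial.monomial (a' : ℕ) ((h a').eval y) with hdefφ
    have hφ0 : φ = 0 := by
      apply Polynomial.eq_zero_of_natDegree_lt_card_of_eval_eq_zero' φ
        (Finset.univ.filter fun x : F => x ^ q + x = c)
      · intro x hx
        have hx' : x ^ q + x = c := (Finset.mem_filter.mp hx).2
        have hcurve : x ^ q + x + y ^ (q + 1) = 0 := by
          rw [hx', hdefc]; ring
        have hsum := hpt x y hcurve
        rw [Fintype.sum_prod_type] at hsum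
        rw [hdefφ]
        rw [Polynomial.eval_finset_sum]
        rw [← hsum]
        apply Finset.sum_congr rfl
        intro a' _
        rw [Polynomial.eval_monomial, hdefh]
        rw [Polynomial.eval_finset_sum]
        rw [Finset.sum_mul]
        apply Finset.sum_congr rfl
        intro b _
        rw [Polynomial.eval_monomial]
        ring
      · have hlt : φ.natDegree < q := by
          have : φ.natDegree ≤ q - 1 := by
            apply Polynomial.natDegree_sum_le_of_forall_le
            intro a' _
            exact (Polynomial.natDegree_monomial_le _).trans (by omega)
          omega
        exact lt_of_lt_of_le hlt
          (herm_aux_fiber_card p l q hp hl hq F hF c hc)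
    have := congrArg (fun P => Polynomial.coeff P (a : ℕ)) hφ0
    simpa [hdefφ, Polynomial.finset_sum_coeff, Polynomial.coeff_monomial,
      Fin.val_eq_val] using this
  -- Step B: each h a is the zero polynomial
  have stepB : ∀ a : Fin q, h a = 0 := by
    intro a
    apply Polynomial.eq_zero_of_natDegree_lt_card_of_eval_eq_zero (h a)
      Function.injective_id (fun y => stepA y a)
    rw [hF]
    have : (h a).natDegree ≤ q ^ 2 - 1 := by
      apply Polynomial.natDegree_sum_le_of_forall_le
      intro b _
      exact (Polynomial.natDegree_monomial_le _).trans (by omega)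
    have hq2pos : 0 < q ^ 2 := by positivity
    omega
  have := congrArg (fun P => Polynomial.coeff P (ab.2 : ℕ)) (stepB ab.1)
  simpa [hdefh, Polynomial.finset_sum_coeff, Polynomial.coeff_monomial,
    Fin.val_eq_val] using this
end

section
/- Let p be an odd prime, l ≥ 1, q = p^l, and α, β ∈ F_{q^2}. Suppose p_{α,β}(t) = t^{q+1} + α^q·t^q + α·t + (β + β^q) has q+1 distinct roots σ_0, …, σ_q in F_{q^2}, and set P_k = Σ_{i=0}^{q} σ_i^k. Then for every natural number k, P_{k+1} = −α^q·P_k if and only if deg_{α,β}(t^k) < q, i.e., if and only if the remainder of t^k upon division by p_{α,β}(t) has degree strictly less than q. -/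
/-! Shifting the roots by `α ^ q` gives `τ i = σ i + α ^ q`, and Frobenius turns the root equation
into `τ i ^ (q + 1) = c := α ^ (q + 1) - γ`. Being `q + 1` distinct, the `τ i` are all the
`(q + 1)`-th roots of `c ≠ 0`, i.e. one of them times the `(q + 1)`-th roots of unity, so
`∑ τ i ^ m = 0` for `0 < m ≤ q`. If `r` is the remainder of `t ^ k`, then
`P (k + 1) + α ^ q * P k = ∑ τ i * r (σ i) = c * [t ^ q] r`, so the recurrence holds exactly when
`r` has no `t ^ q` term. -/

open Polynomial

section RootsOfXPowSubC

variable {K : Type*} [Field K] {n : ℕ} {ζ c : K}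

theorem IsPrimitiveRoot.sum_pow_eq_zero_of_pow_eq (hζ : IsPrimitiveRoot ζ n) {m : ℕ}
    (hm : ¬n ∣ m) {τ : Fin n → K} (hτ : Function.Injective τ) (hτc : ∀ i, τ i ^ n = c) :
    ∑ i, τ i ^ m = 0 := by
  rcases Nat.eq_zero_or_pos n with rfl | hn
  · simp
  have hroots : Finset.univ.val.map τ = nthRoots n c := by
    refine Multiset.eq_of_le_of_card_le ?_ ?_
    · rw [Multiset.le_iff_subset (Finset.univ.nodup.map hτ)]
      intro x hx
      obtain ⟨i, -, rfl⟩ := Multiset.mem_map.mp hx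
      exact (mem_nthRoots hn).mpr (hτc i)
    · simpa using Polynomial.card_nthRoots n c
  have hgeom : ∑ j ∈ Finset.range n, (ζ ^ m) ^ j = 0 := by
    have hζm : ζ ^ m - 1 ≠ 0 := sub_ne_zero.mpr fun h => hm ((hζ.pow_eq_one_iff_dvd m).mp h)
    refine (mul_eq_zero.mp ?_).resolve_right hζm
    rw [geom_sum_mul, ← pow_mul, mul_comm, pow_mul, hζ.pow_eq_one, one_pow, sub_self]
  let i₀ : Fin n := ⟨0, hn⟩
  calc ∑ i, τ i ^ m = ((nthRoots n c).map (· ^ m)).sum := by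
        rw [← hroots, Multiset.map_map]; rfl
    _ = τ i₀ ^ m * ∑ j ∈ Finset.range n, (ζ ^ m) ^ j := by
        rw [hζ.nthRoots_eq (hτc i₀), Multiset.map_map, Finset.mul_sum, ← Finset.sum_map_val]
        simp [mul_pow, ← pow_mul, mul_comm]
    _ = 0 := by rw [hgeom, mul_zero]

theorem IsPrimitiveRoot.sum_mul_eval_eq_of_pow_eq (hζ : IsPrimitiveRoot ζ (n + 1))
    {τ : Fin (n + 1) → K} (hτ : Function.Injective τ) (hτc : ∀ i, τ i ^ (n + 1) = c)
    {g : K[X]} (hg : g.natDegree ≤ n) :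
    ∑ i, τ i * g.eval (τ i) = (n + 1) * c * g.coeff n := by
  have hpow : ∀ j ∈ Finset.range (n + 1),
      ∑ i, τ i ^ (j + 1) = if j = n then (n + 1) * c else 0 := by
    intro j hj
    split_ifs with hjn
    · simp [hjn, hτc]
    · refine hζ.sum_pow_eq_zero_of_pow_eq (fun hdvd => ?_) hτ hτc
      have := Nat.le_of_dvd j.succ_pos hdvd
      have := Finset.mem_range.mp hj
      omega
  calc ∑ i, τ i * g.eval (τ i)
      = ∑ j ∈ Finset.range (n + 1), g.coeff j * ∑ i, τ i ^ (j + 1) := by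
        simp only [eval_eq_sum_range' (Nat.lt_succ_of_le hg), Finset.mul_sum]
        rw [Finset.sum_comm]
        refine Finset.sum_congr rfl fun j _ => Finset.sum_congr rfl fun i _ => by ring
    _ = (n + 1) * c * g.coeff n := by
        rw [Finset.sum_congr rfl fun j hj => by rw [hpow j hj]]
        simp [mul_comm]

end RootsOfXPowSubC

theorem Polynomial.coeff_taylor_of_natDegree_le {R : Type*} [CommRing R] {f : R[X]} {n : ℕ}
    (hf : f.natDegree ≤ n) (r : R) : (taylor r f).coeff n = f.coeff n := by
  rcases hf.lt_or_eq with hlt | rfl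
  · rw [coeff_eq_zero_of_natDegree_lt hlt, coeff_eq_zero_of_natDegree_lt (by rwa [natDegree_taylor])]
  · exact coeff_taylor_natDegree (r := r) (f := f)

theorem Polynomial.degree_lt_iff_coeff_eq_zero {R : Type*} [Semiring R] {f : R[X]} {n : ℕ}
    (hf : f.natDegree ≤ n) : f.degree < n ↔ f.coeff n = 0 := by
  refine ⟨coeff_eq_zero_of_degree_lt, fun h => (degree_lt_iff_coeff_zero f n).mpr fun m hm => ?_⟩
  rcases hm.eq_or_lt with rfl | hlt
  · exact h
  · exact coeff_eq_zero_of_natDegree_lt (hf.trans_lt hlt)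

theorem FiniteField.exists_isPrimitiveRoot_of_dvd {F : Type*} [Field F] [Fintype F] {n : ℕ}
    (hn : n ∣ Fintype.card F - 1) : ∃ ζ : F, IsPrimitiveRoot ζ n := by
  classical
  obtain ⟨g, hg⟩ := IsCyclic.exists_ofOrder_eq_natCard (α := Fˣ)
  have hgF : IsPrimitiveRoot (g : F) (Fintype.card F - 1) := by
    rw [← Fintype.card_units, ← Nat.card_eq_fintype_card, ← hg, ← orderOf_units]
    exact IsPrimitiveRoot.orderOf _
  obtain ⟨m, hm⟩ := hn
  have hm0 : m ≠ 0 := by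
    rintro rfl
    have := Fintype.one_lt_card (α := F)
    omega
  refine ⟨(g : F) ^ m, ?_⟩
  have := hgF.pow_of_dvd hm0 (Dvd.intro_left n hm.symm)
  rwa [hm, Nat.mul_div_cancel _ (Nat.pos_of_ne_zero hm0)] at this

section PPoly

variable {R : Type*} [CommRing R]

-- `p_{α,β}` with `γ = β + β ^ q`.
noncomputable def pPoly (q : ℕ) (α γ : R) : R[X] :=
  X ^ (q + 1) + C (α ^ q) * X ^ q + C α * X + C γ

@[simp]
theorem eval_pPoly (q : ℕ) (α γ x : R) :
    (pPoly q α γ).eval x = x ^ (q + 1) + α ^ q * x ^ q + α * x + γ := by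
  simp [pPoly]

variable {q : ℕ} (α γ : R)

theorem degree_pPoly_sub_X_pow_lt (hq : q ≠ 0) :
    (pPoly q α γ - X ^ (q + 1)).degree < ↑(q + 1) := by
  refine lt_of_le_of_lt (b := (q : WithBot ℕ)) ?_ (by exact_mod_cast q.lt_succ_self)
  rw [pPoly, add_assoc, add_assoc, add_sub_cancel_left]
  compute_degree
  exact max_le le_rfl (by exact_mod_cast Nat.one_le_iff_ne_zero.mpr hq)

theorem pPoly_monic (hq : q ≠ 0) : (pPoly q α γ).Monic := by
  simpa using monic_X_pow_add (degree_pPoly_sub_X_pow_lt α γ hq)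

theorem natDegree_pPoly [Nontrivial R] (hq : q ≠ 0) : (pPoly q α γ).natDegree = q + 1 := by
  rw [← add_sub_cancel (X ^ (q + 1)) (pPoly q α γ), natDegree_add_eq_left_of_degree_lt,
    natDegree_X_pow]
  simpa using degree_pPoly_sub_X_pow_lt α γ hq

end PPoly

theorem add_pow_pow_succ_of_isRoot_pPoly {R : Type*} [CommRing R] {p l q : ℕ} [ExpChar R p]
    (hq : q = p ^ l) {α γ x : R} (hα : α ^ (q * q) = α) (hx : (pPoly q α γ).IsRoot x) :
    (x + α ^ q) ^ (q + 1) = α ^ (q + 1) - γ := by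
  have hfrob : (x + α ^ q) ^ q = x ^ q + α := by
    rw [hq, add_pow_expChar_pow, ← pow_mul, ← hq, hα]
  rw [pow_succ, hfrob]
  have hx' := hx.eq_zero
  rw [eval_pPoly] at hx'
  linear_combination hx'

section FiniteField

variable {F : Type*} [Field F] [Fintype F] {p l q : ℕ} {α γ : F} {σ : Fin (q + 1) → F}

theorem add_pow_pow_succ_of_card_eq (hp : p.Prime) (hq : q = p ^ l)
    (hF : Fintype.card F = q ^ 2) {x : F} (hx : (pPoly q α γ).IsRoot x) :
    (x + α ^ q) ^ (q + 1) = α ^ (q + 1) - γ := by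
  have : Fact p.Prime := ⟨hp⟩
  have : CharP F p := charP_of_card_eq_prime_pow (f := l * 2) (by rw [hF, hq, pow_mul])
  refine add_pow_pow_succ_of_isRoot_pPoly hq ?_ hx
  rw [← sq, ← hF, FiniteField.pow_card]

theorem sub_ne_zero_of_injective_roots (hp : p.Prime) (hq : q = p ^ l)
    (hF : Fintype.card F = q ^ 2) (hσ : Function.Injective σ)
    (hroot : ∀ i, (pPoly q α γ).IsRoot (σ i)) : α ^ (q + 1) - γ ≠ 0 := by
  have hq0 : q ≠ 0 := hq ▸ pow_ne_zero _ hp.ne_zero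
  intro hc
  have hσ_eq : ∀ i, σ i = -α ^ q := fun i => by
    have := add_pow_pow_succ_of_card_eq hp hq hF (hroot i)
    rw [hc, pow_eq_zero_iff q.succ_ne_zero] at this
    exact eq_neg_of_add_eq_zero_left this
  have := hσ ((hσ_eq 0).trans (hσ_eq (Fin.last q)).symm)
  exact hq0 (by simpa [Fin.ext_iff] using this.symm)

theorem sum_add_mul_eval_eq_coeff (hp : p.Prime) (hq : q = p ^ l)
    (hF : Fintype.card F = q ^ 2) (hσ : Function.Injective σ)
    (hroot : ∀ i, (pPoly q α γ).IsRoot (σ i)) {g : F[X]} (hg : g.natDegree ≤ q) :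
    ∑ i, (σ i + α ^ q) * g.eval (σ i) = (α ^ (q + 1) - γ) * g.coeff q := by
  have hqF : (q : F) = 0 := by
    have := FiniteField.cast_card_eq_zero F
    rwa [hF, Nat.cast_pow, pow_eq_zero_iff two_ne_zero] at this
  obtain ⟨ζ, hζ⟩ := FiniteField.exists_isPrimitiveRoot_of_dvd (F := F) (n := q + 1)
    ⟨q - 1, by simpa [hF] using Nat.sq_sub_sq q 1⟩
  have hτ : Function.Injective (σ · + α ^ q) := (add_left_injective _).comp hσ
  calc ∑ i, (σ i + α ^ q) * g.eval (σ i)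
      = ∑ i, (σ i + α ^ q) * (taylor (-α ^ q) g).eval (σ i + α ^ q) := by
        simp [taylor_eval]
    _ = (q + 1) * (α ^ (q + 1) - γ) * (taylor (-α ^ q) g).coeff q :=
        hζ.sum_mul_eval_eq_of_pow_eq hτ (fun i => add_pow_pow_succ_of_card_eq hp hq hF (hroot i))
          (by rwa [natDegree_taylor])
    _ = (α ^ (q + 1) - γ) * g.coeff q := by
        rw [coeff_taylor_of_natDegree_le hg, hqF, zero_add, one_mul]

end FiniteField

theorem powerSum_criterion_general (p l q : ℕ) (hp : p.Prime)
    (hq : q = p ^ l) (F : Type*) [Field F] [Fintype F] (hF : Fintype.card F = q ^ 2)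
    (α β : F) (σ : Fin (q + 1) → F) (hσinj : Function.Injective σ)
    (hσroot : ∀ i, (σ i) ^ (q + 1) + α ^ q * (σ i) ^ q + α * (σ i) + (β + β ^ q) = 0)
    (k : ℕ) :
    (∑ i, σ i ^ (k + 1)) = -α ^ q * (∑ i, σ i ^ k) ↔
      ((X ^ k : F[X]) %ₘ
        (X ^ (q + 1) + C (α ^ q) * X ^ q + C α * X + C (β + β ^ q))).degree < (q : ℕ) := by
  have hq0 : q ≠ 0 := hq ▸ pow_ne_zero _ hp.ne_zero
  have hroot : ∀ i, (pPoly q α (β + β ^ q)).IsRoot (σ i) := by simpa using hσroot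
  change _ ↔ (X ^ k %ₘ pPoly q α (β + β ^ q)).degree < q
  set r := X ^ k %ₘ pPoly q α (β + β ^ q)
  have hne : pPoly q α (β + β ^ q) ≠ 1 := fun h => by
    simpa [h] using natDegree_pPoly α (β + β ^ q) hq0
  have hr : r.natDegree ≤ q := Nat.lt_succ_iff.mp <| by
    simpa [natDegree_pPoly _ _ hq0] using
      natDegree_modByMonic_lt (X ^ k) (pPoly_monic α (β + β ^ q) hq0) hne
  have hpow : ∀ i, σ i ^ k = r.eval (σ i) := fun i => by
    simpa using (eval₂_modByMonic_eq_self_of_root (p := X ^ k) (hroot i).eq_zero).symm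
  have key : (∑ i, σ i ^ (k + 1)) + α ^ q * ∑ i, σ i ^ k =
      (α ^ (q + 1) - (β + β ^ q)) * r.coeff q := by
    rw [← sum_add_mul_eval_eq_coeff hp hq hF hσinj hroot hr, Finset.mul_sum,
      ← Finset.sum_add_distrib]
    exact Finset.sum_congr rfl fun i _ => by rw [← hpow i]; ring
  rw [degree_lt_iff_coeff_eq_zero hr,
    ← mul_eq_zero_iff_left (sub_ne_zero_of_injective_roots hp hq hF hσinj hroot), ← key,
    add_eq_zero_iff_eq_neg, neg_mul]

/-- Lemma 3 (power-sum criterion): with `P_k = Σ σ_i^k` the power sums of the `q+1`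
distinct roots of `p_{α,β}`, we have `P_{k+1} = -α^q P_k` iff the remainder of `t^k`
modulo `p_{α,β}(t)` has degree `< q`. -/
theorem powerSum_criterion (p l q : ℕ) (hp : p.Prime) (hodd : Odd p) (hl : 1 ≤ l)
    (hq : q = p ^ l) (F : Type*) [Field F] [Fintype F] (hF : Fintype.card F = q ^ 2)
    (α β : F) (σ : Fin (q + 1) → F) (hσinj : Function.Injective σ)
    (hσroot : ∀ i, (σ i) ^ (q + 1) + α ^ q * (σ i) ^ q + α * (σ i) + (β + β ^ q) = 0)
    (k : ℕ) :
    (∑ i, σ i ^ (k + 1)) = -α ^ q * (∑ i, σ i ^ k) ↔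
      ((X ^ k : F[X]) %ₘ
        (X ^ (q + 1) + C (α ^ q) * X ^ q + C α * X + C (β + β ^ q))).degree < (q : ℕ) :=
  powerSum_criterion_general p l q hp hq F hF α β σ hσinj hσroot k
end

section
/- Let p be an odd prime, l ≥ 1, q = p^l, and α, β ∈ F_{q^2} with γ = β + β^q. Suppose p_{α,β}(t) = t^{q+1} + α^q·t^q + α·t + γ has q+1 distinct roots σ_0, …, σ_q in F_{q^2}, and set P_k = Σ_{i=0}^{q} σ_i^k. Then α^{q+1} − γ ≠ 0, and for every natural number k, the coefficient of t^q in the remainder of t^k upon division by p_{α,β}(t) equals (α^q·P_k + P_{k+1})/(α^{q+1} − γ). -/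
/-!
Since `x ↦ x^q` is an additive involution of `𝔽_{q²}`, every root `σ` of `p_{α,β}` satisfies
`(σ + α^q)^(q+1) = (σ^q + α)(σ + α^q) = α^(q+1) - γ`; if this vanished, all `q + 1` roots would
equal `-α^q`. Hence `p_{α,β}` is the nodal polynomial of its roots, the remainder of `t^k` is the
Lagrange interpolant of `σᵢ ↦ σᵢ^k`, and its top coefficient is `∑ σᵢ^k / p'(σᵢ)`, where
`p'(σ) = σ^q + α = (α^(q+1) - γ) / (σ + α^q)` because `q = 0` in `𝔽_{q²}`.
-/

open Polynomial Finset

namespace Lagrange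

variable {F ι : Type*} [Field F] {s : Finset ι} {v : ι → F}

theorem eq_nodal_of_monic_of_eval_eq_zero (hvs : Set.InjOn v s) {P : F[X]} (hP : P.Monic)
    (hdeg : P.natDegree = #s) (hroot : ∀ i ∈ s, P.eval (v i) = 0) : P = nodal s v := by
  have hdeg' : P.degree = #s := by rw [degree_eq_natDegree hP.ne_zero, hdeg]
  refine eq_of_degree_le_of_eval_index_eq s hvs hdeg'.le (by rw [hdeg', degree_nodal])
    (by rw [hP.leadingCoeff, nodal_monic.leadingCoeff]) fun i hi => ?_
  rw [hroot i hi, eval_nodal_at_node hi]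

theorem coeff_modByMonic_nodal [DecidableEq ι] (hvs : Set.InjOn v s) (f : F[X]) :
    (f %ₘ nodal s v).coeff (#s - 1) =
      ∑ i ∈ s, f.eval (v i) / (derivative (nodal s v)).eval (v i) := by
  have hdeg : (f %ₘ nodal s v).degree < #s := by
    simpa using degree_modByMonic_lt f (nodal_monic (s := s) (v := v))
  rw [coeff_eq_sum hvs hdeg]
  refine sum_congr rfl fun i hi => ?_
  rw [eval_nodal_derivative_eval_node_eq hi, eval_nodal, modByMonic_eq_sub_mul_div,
    eval_sub, eval_mul, eval_nodal_at_node hi, zero_mul, sub_zero]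

end Lagrange

namespace FiniteField

variable {F : Type*} [Field F] [Fintype F] {q : ℕ}

theorem pos_of_card_eq_sq (hF : Fintype.card F = q ^ 2) : 0 < q :=
  Nat.pos_of_ne_zero fun hq => by simp [hq] at hF

theorem natCast_eq_zero_of_card_eq_sq (hF : Fintype.card F = q ^ 2) : (q : F) = 0 := by
  have : (q : F) ^ 2 = 0 := by exact_mod_cast hF ▸ cast_card_eq_zero F
  exact pow_eq_zero_iff two_ne_zero |>.mp this

theorem add_pow_of_card_eq_sq (hF : Fintype.card F = q ^ 2) (x y : F) :
    (x + y) ^ q = x ^ q + y ^ q := by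
  obtain ⟨r, _, n, hr, hn⟩ := card' F
  -- `q` divides `|F| = r^n`, so it is a power of the characteristic `r`.
  obtain ⟨m, -, rfl⟩ := (Nat.dvd_prime_pow hr).1 (hn ▸ hF ▸ dvd_pow_self q two_ne_zero)
  have : Fact r.Prime := ⟨hr⟩
  exact add_pow_char_pow ..

theorem pow_pow_of_card_eq_sq (hF : Fintype.card F = q ^ 2) (x : F) : (x ^ q) ^ q = x := by
  rw [← pow_mul, ← sq, ← hF, pow_card]

end FiniteField

section NormPoly

variable {R : Type*} [CommRing R]

/-- The paper's `p_{α,β}`, written with `γ = β + β^q`. -/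
noncomputable def normPoly (q : ℕ) (α γ : R) : R[X] :=
  X ^ (q + 1) + C (α ^ q) * X ^ q + C α * X + C γ

theorem eval_normPoly (q : ℕ) (α γ x : R) :
    (normPoly q α γ).eval x = x ^ (q + 1) + α ^ q * x ^ q + α * x + γ := by
  simp [normPoly]

theorem monic_normPoly {q : ℕ} (hq : 0 < q) (α γ : R) : (normPoly q α γ).Monic := by
  unfold normPoly
  monicity!
  omega

theorem natDegree_normPoly [Nontrivial R] {q : ℕ} (hq : 0 < q) (α γ : R) :
    (normPoly q α γ).natDegree = q + 1 := by
  unfold normPoly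
  compute_degree!
  simp [hq.ne']

theorem eval_derivative_normPoly {q : ℕ} (hq : (q : R) = 0) (α γ x : R) :
    (derivative (normPoly q α γ)).eval x = x ^ q + α := by
  simp [normPoly, derivative_X_pow, hq, -map_pow]

theorem mul_eq_of_eval_normPoly_eq_zero {q : ℕ} {α γ x : R} (hx : (normPoly q α γ).eval x = 0) :
    (x ^ q + α) * (x + α ^ q) = α ^ (q + 1) - γ := by
  rw [eval_normPoly] at hx
  linear_combination hx

end NormPoly

section CardSq

variable {F : Type*} [Field F] [Fintype F] {q : ℕ}

theorem eq_neg_of_eval_normPoly_eq_zero (hF : Fintype.card F = q ^ 2) {α γ x : F}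
    (hx : (normPoly q α γ).eval x = 0) (hγ : α ^ (q + 1) - γ = 0) : x = -α ^ q := by
  have hfrob : (x + α ^ q) ^ q = x ^ q + α := by
    rw [FiniteField.add_pow_of_card_eq_sq hF, FiniteField.pow_pow_of_card_eq_sq hF]
  have : (x + α ^ q) ^ (q + 1) = 0 := by
    rw [pow_succ, hfrob, mul_eq_of_eval_normPoly_eq_zero hx, hγ]
  exact eq_neg_of_add_eq_zero_left (pow_eq_zero_iff q.succ_ne_zero |>.mp this)

end CardSq

theorem remainder_top_coefficient_general (q : ℕ)
    (F : Type*) [Field F] [Fintype F] (hF : Fintype.card F = q ^ 2)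
    (α β : F) (σ : Fin (q + 1) → F) (hσinj : Function.Injective σ)
    (hσroot : ∀ i, (σ i) ^ (q + 1) + α ^ q * (σ i) ^ q + α * (σ i) + (β + β ^ q) = 0) :
    α ^ (q + 1) - (β + β ^ q) ≠ 0 ∧
    ∀ k : ℕ,
      ((X ^ k : F[X]) %ₘ
          (X ^ (q + 1) + C (α ^ q) * X ^ q + C α * X + C (β + β ^ q))).coeff q =
        (α ^ q * (∑ i, σ i ^ k) + ∑ i, σ i ^ (k + 1)) / (α ^ (q + 1) - (β + β ^ q)) := by
  set γ := β + β ^ q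
  have hq := FiniteField.pos_of_card_eq_sq hF
  have hroot i : (normPoly q α γ).eval (σ i) = 0 := (eval_normPoly ..).trans (hσroot i)
  have hD : α ^ (q + 1) - γ ≠ 0 := fun hD => by
    have h0last : (0 : Fin (q + 1)) = Fin.last q := hσinj <| by
      rw [eq_neg_of_eval_normPoly_eq_zero hF (hroot _) hD,
        eq_neg_of_eval_normPoly_eq_zero hF (hroot _) hD]
    exact hq.ne (by simpa using congrArg Fin.val h0last)
  refine ⟨hD, fun k => ?_⟩
  have hnodal : normPoly q α γ = Lagrange.nodal univ σ :=
    Lagrange.eq_nodal_of_monic_of_eval_eq_zero hσinj.injOn (monic_normPoly hq α γ)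
      (by simp [natDegree_normPoly hq]) fun i _ => hroot i
  have hqF : (q : F) = 0 := FiniteField.natCast_eq_zero_of_card_eq_sq hF
  show (X ^ k %ₘ normPoly q α γ).coeff q = _
  calc (X ^ k %ₘ normPoly q α γ).coeff q
      = (X ^ k %ₘ Lagrange.nodal univ σ).coeff (#(univ : Finset (Fin (q + 1))) - 1) := by
        simp [hnodal]
    _ = ∑ i, σ i ^ k / (σ i ^ q + α) := by
        rw [Lagrange.coeff_modByMonic_nodal hσinj.injOn, ← hnodal]
        simp only [eval_pow, eval_X, eval_derivative_normPoly hqF]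
    _ = ∑ i, σ i ^ k * (σ i + α ^ q) / (α ^ (q + 1) - γ) := sum_congr rfl fun i _ => by
        have hmul := mul_eq_of_eval_normPoly_eq_zero (hroot i)
        rw [div_eq_div_iff (left_ne_zero_of_mul (hmul ▸ hD)) hD, ← hmul]
        ring
    _ = _ := by
        rw [← sum_div, mul_sum, ← sum_add_distrib]
        exact congrArg (· / _) (sum_congr rfl fun i _ => by ring)

/-- The coefficient of `t^q` in the remainder of `t^k` modulo `p_{α,β}(t)` equals
`(α^q P_k + P_{k+1}) / (α^{q+1} - γ)`, where `γ = β + β^q` and `P_k` are the power sums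
of the `q+1` distinct roots of `p_{α,β}`; in particular `α^{q+1} - γ ≠ 0`. -/
theorem remainder_top_coefficient (p l q : ℕ) (hp : p.Prime) (hodd : Odd p) (hl : 1 ≤ l)
    (hq : q = p ^ l) (F : Type*) [Field F] [Fintype F] (hF : Fintype.card F = q ^ 2)
    (α β : F) (σ : Fin (q + 1) → F) (hσinj : Function.Injective σ)
    (hσroot : ∀ i, (σ i) ^ (q + 1) + α ^ q * (σ i) ^ q + α * (σ i) + (β + β ^ q) = 0) :
    α ^ (q + 1) - (β + β ^ q) ≠ 0 ∧
    ∀ k : ℕ,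
      ((X ^ k : F[X]) %ₘ
          (X ^ (q + 1) + C (α ^ q) * X ^ q + C α * X + C (β + β ^ q))).coeff q =
        (α ^ q * (∑ i, σ i ^ k) + ∑ i, σ i ^ (k + 1)) / (α ^ (q + 1) - (β + β ^ q)) :=
  remainder_top_coefficient_general q F hF α β σ hσinj hσroot
end

section
/- Let p be a prime, l ≥ 1, q = p^l, and α, β ∈ F_{q^2} with γ = β + β^q. (i) If σ ∈ F_{q^2} is a root of p_{α,β}(t) = t^{q+1} + α^q·t^q + α·t + γ, then (σ^q + α)(σ + α^q) = α^{q+1} − γ. (ii) If moreover p_{α,β} has q+1 distinct roots σ_0, …, σ_q in F_{q^2}, then for each index i, the product Π_{j ≠ i} (σ_i − σ_j) equals σ_i^q + α. -/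
open Polynomial Finset

/-- (i) Any root `σ` of `p_{α,β}(t) = t^(q+1) + α^q t^q + α t + γ` satisfies
`(σ^q + α)(σ + α^q) = α^(q+1) - γ`; (ii) if `p_{α,β}` has `q+1` distinct roots
`σ_0, …, σ_q`, then `Π_{j ≠ i} (σ_i - σ_j) = σ_i^q + α` for each `i`. -/
theorem hermitian_root_identities (p l q : ℕ) (hp : p.Prime) (hl : 1 ≤ l) (hq : q = p ^ l)
    (F : Type*) [Field F] [Fintype F] (hF : Fintype.card F = q ^ 2) (α β : F) :
    (∀ σ : F, σ ^ (q + 1) + α ^ q * σ ^ q + α * σ + (β + β ^ q) = 0 →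
        (σ ^ q + α) * (σ + α ^ q) = α ^ (q + 1) - (β + β ^ q)) ∧
    (∀ σ : Fin (q + 1) → F, Function.Injective σ →
      (∀ i, (σ i) ^ (q + 1) + α ^ q * (σ i) ^ q + α * (σ i) + (β + β ^ q) = 0) →
      ∀ i, ∏ j ∈ Finset.univ.erase i, (σ i - σ j) = (σ i) ^ q + α) := by
  have hq0 : (q : F) = 0 := by
    have h : ((Fintype.card F : ℕ) : F) = 0 := FiniteField.cast_card_eq_zero F
    rw [hF] at h
    push_cast at h
    exact pow_eq_zero_iff (by norm_num) |>.mp h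
  constructor
  · intro σ hσ
    have h1 : σ ^ (q + 1) = σ ^ q * σ := pow_succ σ q
    have h2 : α ^ (q + 1) = α ^ q * α := pow_succ α q
    rw [h1] at hσ
    rw [h2]
    linear_combination hσ
  · intro σ hinj hroot i
    set γ : F := β + β ^ q with hγ
    set P : F[X] := X ^ (q + 1) + C (α ^ q) * X ^ q + C α * X + C γ with hP
    -- the remainder polynomial has small degree
    have hdeglt : (C (α ^ q) * X ^ q + C α * X + C γ : F[X]).degree < ((q + 1 : ℕ) : WithBot ℕ) := by
      have h1 : (C (α ^ q) * X ^ q : F[X]).degree ≤ (q : WithBot ℕ) := degree_C_mul_X_pow_le _ _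
      have h2 : (C α * X : F[X]).degree ≤ (q : WithBot ℕ) := by
        refine le_trans (degree_C_mul_X_le α) ?_
        have hqpos : 0 < q := hq ▸ pow_pos hp.pos l
        exact_mod_cast hqpos
      have h3 : (C γ : F[X]).degree ≤ (q : WithBot ℕ) :=
        le_trans degree_C_le (by exact_mod_cast Nat.zero_le q)
      have : (C (α ^ q) * X ^ q + C α * X + C γ : F[X]).degree ≤ (q : WithBot ℕ) :=
        le_trans (degree_add_le _ _) (max_le (le_trans (degree_add_le _ _) (max_le h1 h2)) h3)
      exact lt_of_le_of_lt this (by exact_mod_cast Nat.lt_succ_self q)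
    have hPm : P.Monic := by
      have := monic_X_pow_add (p := (C (α ^ q) * X ^ q + C α * X + C γ : F[X])) (n := q + 1) hdeglt
      simpa [hP, add_assoc] using this
    have hPdeg : P.degree = ((q + 1 : ℕ) : WithBot ℕ) := by
      rw [hP]
      rw [show (X ^ (q + 1) + C (α ^ q) * X ^ q + C α * X + C γ : F[X])
          = X ^ (q + 1) + (C (α ^ q) * X ^ q + C α * X + C γ) by ring]
      rw [degree_add_eq_left_of_degree_lt (by simpa [degree_X_pow] using hdeglt), degree_X_pow]
    have hPnd : P.natDegree = q + 1 := natDegree_eq_of_degree_eq_some hPdeg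
    have hP0 : P ≠ 0 := hPm.ne_zero
    have hroot' : ∀ j, P.eval (σ j) = 0 := by
      intro j
      have := hroot j
      simp only [hP, eval_add, eval_mul, eval_pow, eval_X, eval_C]
      linear_combination this
    -- the nodal polynomial
    set Q : F[X] := Lagrange.nodal Finset.univ σ with hQ
    have hQm : Q.Monic := Lagrange.nodal_monic
    have hQnd : Q.natDegree = q + 1 := by
      rw [hQ, Lagrange.natDegree_nodal]; simp
    have hdvd : Q ∣ P := by
      have hle : (Finset.univ.val.map σ : Multiset F) ≤ P.roots := by
        rw [Multiset.le_iff_subset (Finset.univ.nodup.map hinj)]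
        intro a ha
        obtain ⟨j, _, rfl⟩ := Multiset.mem_map.mp ha
        exact (mem_roots hP0).mpr (hroot' j)
      have := (Multiset.prod_X_sub_C_dvd_iff_le_roots hP0 (Finset.univ.val.map σ)).mpr hle
      have hQeq : Q = ((Finset.univ.val.map σ).map fun a => X - C a).prod := by
        rw [hQ, Lagrange.nodal, Finset.prod_eq_multiset_prod, Multiset.map_map]
        rfl
      rwa [hQeq]
    have hPQ : P = Q :=
      eq_of_monic_of_dvd_of_natDegree_le hQm hPm hdvd (by rw [hPnd, hQnd])
    -- derivative computation
    have hderiv : derivative P = X ^ q + C α := by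
      rw [hP]
      rw [derivative_add, derivative_add, derivative_add, derivative_X_pow, derivative_C_mul,
        derivative_X_pow, derivative_C_mul, derivative_X, derivative_C]
      push_cast [hq0]
      simp
    have heval1 : (derivative P).eval (σ i) = σ i ^ q + α := by
      rw [hderiv]; simp
    have heval2 : (derivative P).eval (σ i) = ∏ j ∈ Finset.univ.erase i, (σ i - σ j) := by
      rw [hPQ, hQ, Lagrange.eval_nodal_derivative_eval_node_eq (Finset.mem_univ i),
        Lagrange.eval_nodal]
    rw [← heval1, heval2]
end

section
/- Let p be an odd prime, l ≥ 1, q = p^l, and α, β ∈ F_{q^2}. Suppose p_{α,β}(t) = t^{q+1} + α^q·t^q + α·t + (β + β^q) has q+1 distinct roots σ_0, …, σ_q in F_{q^2}, and set P_k = Σ_{i=0}^{q} σ_i^k. Then for every integer k with 0 ≤ k < q, one has P_k = (−1)^k·α^{qk} and P_{kq} = (−1)^k·α^k. -/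
/-- Lemma 4: for `0 ≤ k < q`, the power sums of the `q+1` distinct roots of `p_{α,β}`
satisfy `P_k = (-1)^k α^(qk)` and `P_{kq} = (-1)^k α^k`. -/
theorem powerSum_values (p l q : ℕ) (hp : p.Prime) (hodd : Odd p) (hl : 1 ≤ l)
    (hq : q = p ^ l) (F : Type*) [Field F] [Fintype F] (hF : Fintype.card F = q ^ 2)
    (α β : F) (σ : Fin (q + 1) → F) (hσinj : Function.Injective σ)
    (hσroot : ∀ i, (σ i) ^ (q + 1) + α ^ q * (σ i) ^ q + α * (σ i) + (β + β ^ q) = 0)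
    (k : ℕ) (hk : k < q) :
    (∑ i, σ i ^ k) = (-1) ^ k * α ^ (q * k) ∧
    (∑ i, σ i ^ (k * q)) = (-1) ^ k * α ^ k := by
  classical
  have hp3 : 3 ≤ p := by
    have h2 := hp.two_le
    have := Nat.odd_iff.mp hodd
    omega
  have hq3 : 3 ≤ q := by
    calc 3 ≤ p := hp3
    _ ≤ p ^ l := Nat.le_self_pow (by omega) p
    _ = q := hq.symm
  haveI : Fact p.Prime := ⟨hp⟩
  -- characteristic
  haveI hcharP : CharP F p := by
    obtain ⟨n, hrp, hcard⟩ := FiniteField.card F (ringChar F)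
    have h2 : (ringChar F) ^ (n : ℕ) = p ^ (l * 2) := by
      rw [← hcard, hF, hq, ← pow_mul]
    have h1 : ringChar F ∣ p ^ (l * 2) := h2 ▸ dvd_pow_self (ringChar F) n.pos.ne'
    have h3 : ringChar F = p :=
      (Nat.prime_dvd_prime_iff_eq hrp hp).mp (hrp.dvd_of_dvd_pow h1)
    exact h3 ▸ ringChar.charP F
  haveI : ExpChar F p := ExpChar.prime hp
  have hqF : (q : F) = 0 := by
    rw [hq]
    push_cast
    rw [CharP.cast_eq_zero F p]
    exact zero_pow (by omega)
  have hoddq : Odd q := by rw [hq]; exact hodd.pow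
  -- x ^ (q*q) = x
  have hxq2 : ∀ x : F, x ^ (q * q) = x := by
    intro x
    have h := FiniteField.pow_card x
    rwa [hF, pow_two] at h
  have hfrobq : ∀ x y : F, (x + y) ^ q = x ^ q + y ^ q := by
    intro x y
    rw [hq]
    exact add_pow_char_pow x y p l
  have hfrobsum : ∀ (f : Fin (q + 1) → F), (∑ i, f i) ^ q = ∑ i, (f i) ^ q := by
    intro f
    have h := map_sum (iterateFrobenius F p l) f Finset.univ
    simp only [iterateFrobenius_def] at h
    rw [← hq] at h
    exact h
  -- factorization of the root equation
  have hfact : ∀ i, (σ i ^ q + α) * (σ i + α ^ q) = α ^ (q + 1) - (β + β ^ q) := by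
    intro i
    linear_combination hσroot i
  set d : F := α ^ (q + 1) - (β + β ^ q) with hd
  have hd0 : d ≠ 0 := by
    intro h0
    have hall : ∀ i, σ i = -α ^ q := by
      intro i
      have h := hfact i
      rw [h0] at h
      rcases mul_eq_zero.mp h with h1 | h2
      · have h1' : σ i ^ q = -α := eq_neg_of_add_eq_zero_left h1
        have hs : σ i = (σ i ^ q) ^ q := by rw [← pow_mul]; exact (hxq2 _).symm
        rw [hs, h1', Odd.neg_pow hoddq]
      · exact eq_neg_of_add_eq_zero_left h2
    have h01 : (⟨0, by omega⟩ : Fin (q + 1)) = ⟨1, by omega⟩ :=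
      hσinj ((hall _).trans (hall _).symm)
    simp only [Fin.mk.injEq] at h01
    omega
  -- shifted roots
  set τ : Fin (q + 1) → F := fun i => σ i + α ^ q with hτ
  have hτinj : Function.Injective τ := fun i j h => by
    apply hσinj
    simpa [hτ] using h
  have hαqq : (α ^ q) ^ q = α := by rw [← pow_mul]; exact hxq2 α
  have hτpow : ∀ i, τ i ^ (q + 1) = d := by
    intro i
    rw [pow_succ]
    have : τ i ^ q = σ i ^ q + α := by
      simp only [hτ]
      rw [hfrobq, hαqq]
    rw [this]
    simp only [hτ]
    exact hfact i
  -- the image of τ is the root set of X^(q+1) - d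
  set T : Finset F := Finset.univ.image τ with hT
  have hTcard : T.card = q + 1 := by
    rw [hT, Finset.card_image_of_injective _ hτinj, Finset.card_univ, Fintype.card_fin]
  set f : Polynomial F := Polynomial.X ^ (q + 1) - Polynomial.C d with hfdef
  have hfmonic : f.Monic := Polynomial.monic_X_pow_sub_C d (by omega)
  have hfne : f ≠ 0 := hfmonic.ne_zero
  have hfroot : ∀ x : F, f.IsRoot x ↔ x ^ (q + 1) = d := by
    intro x
    simp only [hfdef, Polynomial.IsRoot, Polynomial.eval_sub, Polynomial.eval_pow,
      Polynomial.eval_X, Polynomial.eval_C, sub_eq_zero]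
  have hTsub : T ⊆ f.roots.toFinset := by
    intro x hx
    rw [hT, Finset.mem_image] at hx
    obtain ⟨i, _, rfl⟩ := hx
    rw [Multiset.mem_toFinset, Polynomial.mem_roots hfne, hfroot]
    exact hτpow i
  have hTeq : T = f.roots.toFinset := by
    apply Finset.eq_of_subset_of_card_le hTsub
    calc f.roots.toFinset.card ≤ Multiset.card f.roots := Multiset.toFinset_card_le _
    _ ≤ f.natDegree := Polynomial.card_roots' f
    _ = q + 1 := Polynomial.natDegree_X_pow_sub_C
    _ = T.card := hTcard.symm
  have hTmem : ∀ x : F, x ∈ T ↔ x ^ (q + 1) = d := by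
    intro x
    rw [hTeq, Multiset.mem_toFinset, Polynomial.mem_roots hfne, hfroot]
  -- a primitive (q+1)-st root of unity
  obtain ⟨g, hg⟩ := IsCyclic.exists_generator (α := Fˣ)
  obtain ⟨e, he⟩ : ∃ e, q = e + 1 := ⟨q - 1, by omega⟩
  have hepos : 0 < e := by omega
  have horder : orderOf g = e * (q + 1) := by
    rw [orderOf_eq_card_of_forall_mem_zpowers hg, Nat.card_eq_fintype_card,
      Fintype.card_units, hF]
    exact Nat.sub_eq_of_eq_add (by rw [he]; ring)
  set u : Fˣ := g ^ e with hu
  have hupow : u ^ (q + 1) = 1 := by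
    rw [hu, ← pow_mul, ← orderOf_dvd_iff_pow_eq_one, horder]
  have huF : ((u : F)) ^ (q + 1) = 1 := by
    rw [← Units.val_pow_eq_pow_val, hupow, Units.val_one]
  have hujne : ∀ j, 0 < j → j ≤ q → ((u : F)) ^ j ≠ 1 := by
    intro j hj1 hj2 hcon
    have hcu : u ^ j = 1 := by
      apply Units.ext
      rw [Units.val_pow_eq_pow_val, Units.val_one]
      exact hcon
    rw [hu, ← pow_mul, ← orderOf_dvd_iff_pow_eq_one, horder] at hcu
    have hdvd : (q + 1) ∣ j := (Nat.mul_dvd_mul_iff_left hepos).mp hcu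
    have := Nat.le_of_dvd hj1 hdvd
    omega
  -- power sums of τ vanish in range 1..q
  have hsum_tau : ∀ j, 0 < j → j ≤ q → (∑ i, τ i ^ j) = 0 := by
    intro j hj1 hj2
    have himg : T.image (fun x => (u : F) * x) = T := by
      apply Finset.eq_of_subset_of_card_le
      · intro y hy
        rw [Finset.mem_image] at hy
        obtain ⟨x, hx, rfl⟩ := hy
        rw [hTmem] at hx ⊢
        rw [mul_pow, hx, huF, one_mul]
      · rw [Finset.card_image_of_injective _ (mul_right_injective₀ (Units.ne_zero u))]
    have hStau : (∑ x ∈ T, x ^ j) = ∑ i, τ i ^ j := by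
      rw [hT]
      exact Finset.sum_image fun a _ b _ h => hτinj h
    have h1 : (∑ x ∈ T, ((u : F) * x) ^ j) = ∑ x ∈ T, x ^ j := by
      conv_rhs => rw [← himg]
      exact (Finset.sum_image fun a _ b _ h => mul_left_cancel₀ (Units.ne_zero u) h).symm
    have h2 : ((u : F)) ^ j * (∑ x ∈ T, x ^ j) = ∑ x ∈ T, x ^ j := by
      rw [Finset.mul_sum]
      simp_rw [← mul_pow]
      exact h1
    have h3 : (((u : F)) ^ j - 1) * (∑ x ∈ T, x ^ j) = 0 := by
      rw [sub_mul, one_mul, h2, sub_self]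
    rcases mul_eq_zero.mp h3 with h | h
    · exact absurd (sub_eq_zero.mp h) (hujne j hj1 hj2)
    · rw [← hStau]
      exact h
  have hsum_one : (∑ _i : Fin (q + 1), (1 : F)) = 1 := by
    simp only [Finset.sum_const, Finset.card_univ, Fintype.card_fin, nsmul_eq_mul, mul_one]
    push_cast
    rw [hqF, zero_add]
  -- first part via the binomial theorem
  have hpart1 : (∑ i, σ i ^ k) = (-1) ^ k * α ^ (q * k) := by
    have hswap : (∑ i, σ i ^ k) =
        ∑ m ∈ Finset.range (k + 1),
          (∑ i, τ i ^ m) * ((-α ^ q) ^ (k - m) * ((k.choose m : ℕ) : F)) := by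
      calc (∑ i, σ i ^ k)
          = ∑ i, ∑ m ∈ Finset.range (k + 1),
              τ i ^ m * (-α ^ q) ^ (k - m) * ((k.choose m : ℕ) : F) := by
            refine Finset.sum_congr rfl fun i _ => ?_
            rw [← add_pow]
            congr 1
            simp only [hτ]
            ring
        _ = ∑ m ∈ Finset.range (k + 1), ∑ i,
              τ i ^ m * (-α ^ q) ^ (k - m) * ((k.choose m : ℕ) : F) := Finset.sum_comm
        _ = ∑ m ∈ Finset.range (k + 1),
              (∑ i, τ i ^ m) * ((-α ^ q) ^ (k - m) * ((k.choose m : ℕ) : F)) := by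
            refine Finset.sum_congr rfl fun m _ => ?_
            simp_rw [mul_assoc]
            rw [← Finset.sum_mul]
    rw [hswap]
    rw [Finset.sum_eq_single_of_mem 0 (Finset.mem_range.mpr (by omega)) ?_]
    · simp only [pow_zero, Nat.sub_zero, Nat.choose_zero_right, Nat.cast_one, mul_one]
      rw [hsum_one, one_mul, neg_pow, ← pow_mul]
    · intro b hb hb0
      rw [Finset.mem_range] at hb
      rw [hsum_tau b (by omega) (by omega), zero_mul]
  refine ⟨hpart1, ?_⟩
  -- second part via Frobenius
  have h2 : (∑ i, σ i ^ (k * q)) = (∑ i, σ i ^ k) ^ q := by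
    rw [hfrobsum]
    refine Finset.sum_congr rfl fun i _ => ?_
    rw [← pow_mul]
  rw [h2, hpart1, mul_pow, ← pow_mul, ← pow_mul]
  have e1 : ((-1 : F)) ^ (k * q) = (-1) ^ k := by
    rw [mul_comm, pow_mul, Odd.neg_one_pow hoddq]
  have e2 : α ^ (q * k * q) = α ^ k := by
    have hqkq : q * k * q = (q * q) * k := by ring
    rw [hqkq, pow_mul, hxq2]
  rw [e1, e2]
end

section
/- Let p be an odd prime, l ≥ 1, q = p^l, and let α, γ ∈ F_{q^2}. Suppose B is a p × p matrix over F_{q^2} (indexed by 1 ≤ i, j ≤ p) whose first row is B_{1,j} = (−1)^{j−1}·α^{j−1}, whose first column is B_{i,1} = (−1)^{i−1}·α^{q(i−1)}, and whose every contiguous 2×2 submatrix satisfies B_{i+1,j+1} = −α^q·B_{i,j+1} − α·B_{i+1,j} − γ·B_{i,j}. Then for all 1 ≤ i, j ≤ p, B_{i,j} = Σ_{n=0}^{min(i,j)−1} (−1)^{i+j−n} · C(i−1, n) · C(i+j−n−2, i−1) · α^{(i−1−n)q + j−1−n} · γ^n, where C(·,·) denotes binomial coefficients reduced into F_{q^2}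 (which has characteristic p). -/
private def gE (q : ℕ) {F : Type*} [Field F] (α γ : F) (a b n : ℕ) : F :=
  (-1) ^ (a + b - n) * ((a.choose n : ℕ) : F) * (((a + b - n).choose a : ℕ) : F) *
    α ^ ((a - n) * q + (b - n)) * γ ^ n

private lemma gE_eq_zero (q : ℕ) {F : Type*} [Field F] (α γ : F) (a b n : ℕ)
    (hn : min a b < n) : gE q α γ a b n = 0 := by
  rcases lt_or_ge a n with h | h
  · simp [gE, Nat.choose_eq_zero_of_lt h]
  · have hb : a + b - n < a := by omega
    simp [gE, Nat.choose_eq_zero_of_lt hb]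

private lemma gE_sum (q : ℕ) {F : Type*} [Field F] (α γ : F) (a b N : ℕ)
    (hN : min a b + 1 ≤ N) :
    ∑ n ∈ Finset.range N, gE q α γ a b n = ∑ n ∈ Finset.range (min a b + 1), gE q α γ a b n := by
  symm
  apply Finset.sum_subset (Finset.range_subset_range.2 hN)
  intro n _ hn
  simp only [Finset.mem_range] at hn
  exact gE_eq_zero q α γ a b n (by omega)

private lemma gE_zero_rec (q : ℕ) {F : Type*} [Field F] (α γ : F) (a b : ℕ) :
    gE q α γ (a+1) (b+1) 0 = -(α ^ q) * gE q α γ a (b+1) 0 - α * gE q α γ (a+1) b 0 := by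
  simp only [gE, Nat.sub_zero, Nat.choose_zero_right, Nat.cast_one, pow_zero, mul_one, one_mul]
  have i1 : a + 1 + (b + 1) = a + b + 1 + 1 := by omega
  have i2 : a + (b + 1) = a + b + 1 := by omega
  have i3 : a + 1 + b = a + b + 1 := by omega
  rw [i1, i2, i3]
  have p2 : (((a + b + 1 + 1).choose (a+1) : ℕ) : F)
      = ((a + b + 1).choose a : ℕ) + (((a + b + 1).choose (a+1) : ℕ) : F) := by
    rw [Nat.choose_succ_succ]; push_cast; ring
  rw [p2]
  have x1 : α ^ (a * q + (b + 1)) * α ^ q = α ^ ((a + 1) * q + (b + 1)) := by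
    rw [← pow_add]; congr 1; ring
  have x2 : α ^ ((a + 1) * q + b) * α = α ^ ((a + 1) * q + (b + 1)) := by
    rw [← pow_succ, add_assoc]
  linear_combination ((-1 : F) ^ (a + b + 1) * ((a + b + 1).choose a : ℕ)) * x1
    + ((-1 : F) ^ (a + b + 1) * ((a + b + 1).choose (a+1) : ℕ)) * x2

private lemma gE_succ_rec (q : ℕ) {F : Type*} [Field F] (α γ : F) (a b n : ℕ) :
    gE q α γ (a+1) (b+1) (n+1) = -(α ^ q) * gE q α γ a (b+1) (n+1) - α * gE q α γ (a+1) b (n+1)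
      - γ * gE q α γ a b n := by
  rcases lt_or_ge a n with h | h
  · -- n ≥ a + 1 : all binomial factors choose (·, n or n+1) vanish
    simp [gE, Nat.choose_eq_zero_of_lt h,
      Nat.choose_eq_zero_of_lt (show a < n + 1 by omega),
      Nat.choose_eq_zero_of_lt (show a + 1 < n + 1 by omega)]
  rcases lt_or_ge b n with h2 | h2
  · -- b < n ≤ a : the second binomial factors vanish
    have e1 : a + 1 + (b + 1) - (n + 1) = a + b + 1 - n := by omega
    have e2 : a + (b + 1) - (n + 1) = a + b - n := by omega
    have e3 : a + 1 + b - (n + 1) = a + b - n := by omega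
    simp only [gE, e1, e2, e3]
    rw [Nat.choose_eq_zero_of_lt (show a + b + 1 - n < a + 1 by omega),
      Nat.choose_eq_zero_of_lt (show a + b - n < a by omega),
      Nat.choose_eq_zero_of_lt (show a + b - n < a + 1 by omega)]
    simp
  · -- main case : n ≤ a, n ≤ b
    have e1 : a + 1 + (b + 1) - (n + 1) = a + b - n + 1 := by omega
    have e2 : a + (b + 1) - (n + 1) = a + b - n := by omega
    have e3 : a + 1 + b - (n + 1) = a + b - n := by omega
    have e4 : a + 1 - (n + 1) = a - n := by omega
    have e5 : b + 1 - (n + 1) = b - n := by omega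
    simp only [gE, e1, e2, e3, e4, e5]
    have p1 : (((a+1).choose (n+1) : ℕ) : F) = (a.choose n : ℕ) + ((a.choose (n+1) : ℕ) : F) := by
      rw [Nat.choose_succ_succ]; push_cast; ring
    have p2 : (((a + b - n + 1).choose (a+1) : ℕ) : F)
        = ((a + b - n).choose a : ℕ) + (((a + b - n).choose (a+1) : ℕ) : F) := by
      rw [Nat.choose_succ_succ]; push_cast; ring
    rw [p1, p2]
    have e2' : ((a.choose (n+1) : ℕ) : F) * α ^ ((a - (n+1)) * q + (b - n)) * α ^ q
        = (a.choose (n+1) : ℕ) * α ^ ((a - n) * q + (b - n)) := by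
      rcases lt_or_ge n a with hlt | hge
      · rw [mul_assoc, ← pow_add]
        congr 2
        have h' : a - n = a - (n + 1) + 1 := by omega
        rw [h']; ring
      · have : a = n := by omega
        subst this
        simp [Nat.choose_eq_zero_of_lt (Nat.lt_succ_self a)]
    have e3' : (((a + b - n).choose (a+1) : ℕ) : F) * α ^ ((a - n) * q + (b - (n+1))) * α
        = ((a + b - n).choose (a+1) : ℕ) * α ^ ((a - n) * q + (b - n)) := by
      rcases lt_or_ge n b with hlt | hge
      · rw [mul_assoc, ← pow_succ]
        congr 2
        omega
      · have hb2 : a + b - n = a := by omega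
        rw [hb2]
        simp [Nat.choose_eq_zero_of_lt (Nat.lt_succ_self a)]
    linear_combination ((-1 : F) ^ (a + b - n) * γ ^ (n+1) * ((a + b - n).choose a : ℕ)) * e2'
      + ((-1 : F) ^ (a + b - n) * γ ^ (n+1)
          * (((a.choose n : ℕ) : F) + ((a.choose (n+1) : ℕ) : F))) * e3'

private lemma f_rec (q : ℕ) {F : Type*} [Field F] (α γ : F) (a b : ℕ) :
    ∑ n ∈ Finset.range (min (a+1) (b+1) + 1), gE q α γ (a+1) (b+1) n
      = -(α ^ q) * ∑ n ∈ Finset.range (min a (b+1) + 1), gE q α γ a (b+1) n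
        - α * ∑ n ∈ Finset.range (min (a+1) b + 1), gE q α γ (a+1) b n
        - γ * ∑ n ∈ Finset.range (min a b + 1), gE q α γ a b n := by
  rw [← gE_sum q α γ (a+1) (b+1) (a+b+2+1) (by omega),
      ← gE_sum q α γ a (b+1) (a+b+2+1) (by omega),
      ← gE_sum q α γ (a+1) b (a+b+2+1) (by omega),
      ← gE_sum q α γ a b (a+b+2) (by omega)]
  rw [Finset.sum_range_succ' (fun n => gE q α γ (a+1) (b+1) n) (a+b+2),
      Finset.sum_range_succ' (fun n => gE q α γ a (b+1) n) (a+b+2),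
      Finset.sum_range_succ' (fun n => gE q α γ (a+1) b n) (a+b+2)]
  have hterm : ∀ n ∈ Finset.range (a+b+2),
      gE q α γ (a+1) (b+1) (n+1)
        = -(α ^ q) * gE q α γ a (b+1) (n+1) - α * gE q α γ (a+1) b (n+1) - γ * gE q α γ a b n :=
    fun n _ => gE_succ_rec q α γ a b n
  rw [Finset.sum_congr rfl hterm, Finset.sum_sub_distrib, Finset.sum_sub_distrib,
      ← Finset.mul_sum, ← Finset.mul_sum, ← Finset.mul_sum, gE_zero_rec q α γ a b]
  ring

/-- Lemma 5: a `p × p` matrix `B` (1-indexed) over `F_{q^2}` whose first row is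
`B_{1,j} = (-1)^(j-1) α^(j-1)`, whose first column is `B_{i,1} = (-1)^(i-1) α^(q(i-1))`,
and whose every contiguous `2×2` submatrix satisfies
`B_{i+1,j+1} = -α^q B_{i,j+1} - α B_{i+1,j} - γ B_{i,j}`, has entries
`B_{i,j} = Σ_{n=0}^{min(i,j)-1} (-1)^(i+j-n) C(i-1,n) C(i+j-n-2,i-1) α^((i-1-n)q+j-1-n) γ^n`. -/
theorem matrix_entry_formula (p l q : ℕ) (hp : p.Prime) (hodd : Odd p) (hl : 1 ≤ l)
    (hq : q = p ^ l) (F : Type*) [Field F] [Fintype F] (hF : Fintype.card F = q ^ 2)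
    (α γ : F) (B : ℕ → ℕ → F)
    (hrow : ∀ j, 1 ≤ j → j ≤ p → B 1 j = (-1) ^ (j - 1) * α ^ (j - 1))
    (hcol : ∀ i, 1 ≤ i → i ≤ p → B i 1 = (-1) ^ (i - 1) * α ^ (q * (i - 1)))
    (hblock : ∀ i j, 1 ≤ i → i + 1 ≤ p → 1 ≤ j → j + 1 ≤ p →
      B (i + 1) (j + 1) = -α ^ q * B i (j + 1) - α * B (i + 1) j - γ * B i j) :
    ∀ i j, 1 ≤ i → i ≤ p → 1 ≤ j → j ≤ p →
      B i j = ∑ n ∈ Finset.range (min i j),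
        (-1) ^ (i + j - n) * ((i - 1).choose n : F) * ((i + j - n - 2).choose (i - 1) : F) *
          α ^ ((i - 1 - n) * q + (j - 1 - n)) * γ ^ n := by
  have key : ∀ s a b, a + b = s → a + 1 ≤ p → b + 1 ≤ p →
      B (a+1) (b+1) = ∑ n ∈ Finset.range (min a b + 1), gE q α γ a b n := by
    intro s
    induction s using Nat.strong_induction_on with
    | _ s ih =>
      intro a b hs ha hb
      rcases Nat.eq_zero_or_pos a with rfl | haa
      · -- first row
        rw [hrow (b+1) (by omega) hb]
        have : min 0 b = 0 := Nat.zero_min b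
        rw [this, Finset.sum_range_one]
        simp [gE]
      rcases Nat.eq_zero_or_pos b with rfl | hbb
      · -- first column
        rw [hcol (a+1) (by omega) ha]
        have : min a 0 = 0 := Nat.min_zero a
        rw [this, Finset.sum_range_one]
        simp [gE, Nat.choose_self, mul_comm]
      obtain ⟨a, rfl⟩ : ∃ a', a = a' + 1 := ⟨a - 1, by omega⟩
      obtain ⟨b, rfl⟩ : ∃ b', b = b' + 1 := ⟨b - 1, by omega⟩
      rw [hblock (a+1) (b+1) (by omega) ha (by omega) hb]
      rw [ih (a + (b+1)) (by omega) a (b+1) rfl (by omega) hb,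
          ih (a + 1 + b) (by omega) (a+1) b rfl ha (by omega),
          ih (a + b) (by omega) a b rfl (by omega) (by omega)]
      rw [f_rec q α γ a b]
  intro i j hi hip hj hjp
  obtain ⟨a, rfl⟩ : ∃ a, i = a + 1 := ⟨i - 1, by omega⟩
  obtain ⟨b, rfl⟩ : ∃ b, j = b + 1 := ⟨j - 1, by omega⟩
  rw [key (a + b) a b rfl hip hjp]
  have hmin : min (a+1) (b+1) = min a b + 1 := by omega
  rw [hmin]
  apply Finset.sum_congr rfl
  intro n hn
  simp only [Finset.mem_range] at hn
  have e1 : a + 1 + (b + 1) - n = a + b - n + 2 := by omega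
  have e2 : a + 1 - 1 = a := by omega
  have e4 : a + 1 + (b + 1) - n - 2 = a + b - n := by omega
  have e5 : b + 1 - 1 = b := by omega
  rw [e2, e5, e4, e1]
  simp only [gE]
  ring
end

section
/- Let p be an odd prime, l ≥ 1, q = p^l, and α, β ∈ F_{q^2}. Suppose p_{α,β}(t) = t^{q+1} + α^q·t^q + α·t + (β + β^q) has q+1 distinct roots in F_{q^2}. Let k be an integer with 0 ≤ k ≤ q^2, and write k = wq + z with integers w, z satisfying 0 ≤ z < q. If w = 0, or if there exists an integer i with 1 ≤ i ≤ l such that p^i divides w and z ≢ −1 (mod p^i), then deg_{α,β}(t^k) < q, i.e., the remainder of t^k upon division by p_{α,β}(t) has degree strictly less than q. -/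
/-!
Because `(α ^ q) ^ q = α`, the Frobenius identity turns `p_{α,β}` into `Y ^ (q + 1) - d` with
`Y = t + α ^ q`. Expanding `t ^ k = (Y - α ^ q) ^ k` and replacing each `Y ^ j` by
`d ^ (j / (q + 1)) * Y ^ (j % (q + 1))` yields the remainder in powers of `Y`; a term of degree `q`
can only come from an index `j = (A + 1) q + A` with `A < q`, and for those Lucas' theorem makes
`(w q + z).choose j` vanish in characteristic `p`: compare residues modulo `p ^ i` when
`p ^ i ∣ A + 1`, and modulo `q p ^ i` otherwise.
-/

open Polynomial

theorem Nat.Prime.dvd_choose_of_mod_pow_lt {p : ℕ} (hp : p.Prime) (a : ℕ) {n k : ℕ}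
    (h : n % p ^ a < k % p ^ a) : p ∣ n.choose k := by
  have : Fact p.Prime := ⟨hp⟩
  induction a generalizing n k with
  | zero => simp [Nat.mod_one] at h
  | succ a ih =>
    have lucas := Choose.choose_modEq_choose_mod_mul_choose_div_nat (n := n) (k := k) (p := p)
    refine Nat.modEq_zero_iff_dvd.1 (lucas.trans (Nat.modEq_zero_iff_dvd.2 ?_))
    rw [pow_succ', Nat.mod_mul, Nat.mod_mul] at h
    rcases lt_or_ge (n % p) (k % p) with hlt | hle
    · simp [Nat.choose_eq_zero_of_lt hlt]
    · have hhigh : n / p % p ^ a < k / p % p ^ a := by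
        by_contra! hge
        nlinarith [Nat.mul_le_mul_left p hge]
      exact dvd_mul_of_dvd_right (ih hhigh) _

theorem Nat.dvd_add_one_iff_mod_eq_sub_one {n Q : ℕ} (hQ : 0 < Q) :
    Q ∣ n + 1 ↔ n % Q = Q - 1 := by
  obtain ⟨r, s, hr, rfl⟩ : ∃ r s, r < Q ∧ n = r + Q * s :=
    ⟨n % Q, n / Q, Nat.mod_lt n hQ, (Nat.mod_add_div n Q).symm⟩
  rw [Nat.dvd_iff_mod_eq_zero, add_right_comm, Nat.add_mul_mod_self_left,
    Nat.add_mul_mod_self_left, Nat.mod_eq_of_lt hr]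
  rcases (Order.add_one_le_of_lt hr).eq_or_lt with h | h
  · rw [h, Nat.mod_self]; omega
  · rw [Nat.mod_eq_of_lt h]; omega

theorem Nat.Prime.dvd_choose_mul_pow_add {p l i w z A : ℕ} (hp : p.Prime) (hil : i ≤ l)
    (hw : p ^ i ∣ w) (hz : ¬ p ^ i ∣ z + 1) (hzl : z < p ^ l) (hAl : A < p ^ l) :
    p ∣ (w * p ^ l + z).choose ((A + 1) * p ^ l + A) := by
  have hpi : 0 < p ^ i := pow_pos hp.pos i
  by_cases hA : p ^ i ∣ A + 1
  · apply hp.dvd_choose_of_mod_pow_lt i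
    obtain ⟨t, ht⟩ := pow_dvd_pow p hil
    have hlow : ∀ c x, (c * p ^ l + x) % p ^ i = x % p ^ i := fun c x => by
      rw [ht, mul_left_comm, Nat.mul_add_mod]
    rw [hlow, hlow, (Nat.dvd_add_one_iff_mod_eq_sub_one hpi).1 hA]
    have := (Nat.dvd_add_one_iff_mod_eq_sub_one hpi).not.1 hz
    have := Nat.mod_lt z hpi
    omega
  · apply hp.dvd_choose_of_mod_pow_lt (l + i)
    have hhigh : ∀ c x, x < p ^ l → (c * p ^ l + x) / p ^ l = c := fun c x hx => by
      rw [add_comm, Nat.add_mul_div_right _ _ (pow_pos hp.pos l), Nat.div_eq_of_lt hx, zero_add]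
    rw [pow_add, Nat.mod_mul, Nat.mod_mul, hhigh _ _ hzl, hhigh _ _ hAl,
      Nat.mul_add_mod_self_right, Nat.mul_add_mod_self_right, Nat.mod_eq_of_lt hzl,
      Nat.mod_eq_of_lt hAl, Nat.mod_eq_zero_of_dvd hw]
    have : 0 < (A + 1) % p ^ i := Nat.pos_of_ne_zero (mt Nat.dvd_of_mod_eq_zero hA)
    nlinarith

section Reduction

variable {R : Type*} [CommRing R]

theorem sub_dvd_pow_sub_pow_div_mul_pow_mod (x e : R) (n j : ℕ) :
    x ^ n - e ∣ x ^ j - e ^ (j / n) * x ^ (j % n) := by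
  have hsplit : x ^ j = (x ^ n) ^ (j / n) * x ^ (j % n) := by
    rw [← pow_mul, ← pow_add, Nat.div_add_mod]
  rw [hsplit, ← sub_mul]
  exact dvd_mul_of_dvd_left (sub_dvd_pow_sub_pow _ _ _) _

/-- `X ^ k = (Y - c) ^ k` expanded in powers of `Y = X + C c` and reduced by `Y ^ (n + 1) = d`. -/
noncomputable def reducedXPow (c d : R) (n k : ℕ) : R[X] :=
  ∑ j ∈ Finset.range (k + 1),
    C (k.choose j * (-c) ^ (k - j) * d ^ (j / (n + 1))) * (X + C c) ^ (j % (n + 1))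

theorem dvd_X_pow_sub_reducedXPow (c d : R) (n k : ℕ) :
    (X + C c) ^ (n + 1) - C d ∣ X ^ k - reducedXPow c d n k := by
  have hX : (X : R[X]) ^ k = ∑ j ∈ Finset.range (k + 1),
      (X + C c) ^ j * (-C c) ^ (k - j) * (k.choose j : R[X]) := by
    rw [← add_pow, add_neg_cancel_right]
  rw [hX, reducedXPow, ← Finset.sum_sub_distrib]
  refine Finset.dvd_sum fun j _ => ?_
  have hterm : (X + C c) ^ j * (-C c) ^ (k - j) * (k.choose j : R[X]) -
      C (k.choose j * (-c) ^ (k - j) * d ^ (j / (n + 1))) * (X + C c) ^ (j % (n + 1)) =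
      ((X + C c) ^ j - C d ^ (j / (n + 1)) * (X + C c) ^ (j % (n + 1))) *
        ((-C c) ^ (k - j) * (k.choose j : R[X])) := by
    simp only [C_mul, C_pow, C_neg, map_natCast]
    ring
  rw [hterm]
  exact dvd_mul_of_dvd_left (sub_dvd_pow_sub_pow_div_mul_pow_mod _ _ _ _) _

variable [Nontrivial R]

theorem degree_pow_X_add_C (c : R) (m : ℕ) : ((X + C c) ^ m).degree = (m : WithBot ℕ) := by
  rw [degree_eq_natDegree ((monic_X_add_C c).pow m).ne_zero, natDegree_pow_X_add_C]

theorem degree_C_lt_degree_pow_X_add_C (c d : R) (n : ℕ) :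
    (C d).degree < ((X + C c) ^ (n + 1)).degree := by
  rw [degree_pow_X_add_C]
  exact degree_C_le.trans_lt (by exact_mod_cast n.succ_pos)

theorem monic_pow_X_add_C_sub_C (c d : R) (n : ℕ) : ((X + C c) ^ (n + 1) - C d).Monic :=
  ((monic_X_add_C c).pow (n + 1)).sub_of_left (degree_C_lt_degree_pow_X_add_C c d n)

theorem degree_pow_X_add_C_sub_C (c d : R) (n : ℕ) :
    ((X + C c) ^ (n + 1) - C d).degree = ((n + 1 : ℕ) : WithBot ℕ) := by
  rw [degree_sub_eq_left_of_degree_lt (degree_C_lt_degree_pow_X_add_C c d n), degree_pow_X_add_C]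

theorem degree_reducedXPow_lt {c d : R} {n k : ℕ}
    (h : ∀ j ≤ k, j % (n + 1) = n → (k.choose j : R) = 0) :
    (reducedXPow c d n k).degree < n := by
  refine (degree_sum_le _ _).trans_lt <|
    (Finset.sup_lt_iff (WithBot.bot_lt_coe n)).2 fun j hj => ?_
  by_cases hjn : j % (n + 1) = n
  · simp [h j (Finset.mem_range_succ_iff.1 hj) hjn]
  · have : j % (n + 1) < n := by have := Nat.mod_lt j (by omega : 0 < n + 1); omega
    refine degree_le_natDegree.trans_lt (WithBot.coe_lt_coe.2 ?_)
    exact (natDegree_C_mul_le _ _).trans_lt (by rwa [natDegree_pow_X_add_C])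

theorem degree_X_pow_modByMonic_lt {c d : R} {n k : ℕ}
    (h : ∀ j ≤ k, j % (n + 1) = n → (k.choose j : R) = 0) :
    (X ^ k %ₘ ((X + C c) ^ (n + 1) - C d)).degree < n := by
  have hmonic := monic_pow_X_add_C_sub_C c d n
  have hdeg : (reducedXPow c d n k).degree < n := degree_reducedXPow_lt h
  rw [modByMonic_eq_of_dvd_sub hmonic (dvd_X_pow_sub_reducedXPow c d n k),
    (modByMonic_eq_self_iff hmonic).2]
  · exact hdeg
  · rw [degree_pow_X_add_C_sub_C]
    exact hdeg.trans (by exact_mod_cast n.lt_succ_self)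

end Reduction

theorem X_pow_add_one_add_eq_X_add_C_pow_sub_C {R : Type*} [CommRing R] {p : ℕ} [ExpChar R p]
    (l : ℕ) {a b : R} (hab : a ^ p ^ l = b) (e : R) :
    X ^ (p ^ l + 1) + C a * X ^ p ^ l + C b * X + C e =
      (X + C a) ^ (p ^ l + 1) - C (a * b - e) := by
  rw [pow_succ (X + C a), add_pow_expChar_pow, ← C_pow, hab]
  simp only [C_sub, C_mul]
  ring

theorem degree_reduction_condition_general (p l q : ℕ) (hp : p.Prime)
    (hq : q = p ^ l) (F : Type*) [Field F] [Fintype F] (hF : Fintype.card F = q ^ 2)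
    (α β : F) (k w z : ℕ) (hk : k ≤ q ^ 2) (hkwz : k = w * q + z) (hz : z < q)
    (hcond : w = 0 ∨ ∃ i, 1 ≤ i ∧ i ≤ l ∧ p ^ i ∣ w ∧ ¬ (p ^ i ∣ (z + 1))) :
    ((X ^ k : F[X]) %ₘ
      (X ^ (q + 1) + C (α ^ q) * X ^ q + C α * X + C (β + β ^ q))).degree < (q : ℕ) := by
  have : Fact p.Prime := ⟨hp⟩
  have : CharP F p := charP_of_card_eq_prime_pow (f := l * 2) (by rw [hF, hq, pow_mul])
  have hfrob : (α ^ q) ^ q = α := by rw [← pow_mul, ← sq, ← hF, FiniteField.pow_card]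
  subst hq
  rw [X_pow_add_one_add_eq_X_add_C_pow_sub_C l hfrob]
  rcases hcond with rfl | ⟨i, -, hil, hw, hz1⟩
  · calc _ ≤ (X ^ k : F[X]).degree := degree_modByMonic_le_left
      _ < _ := by rw [degree_X_pow]; exact_mod_cast (by omega)
  · refine degree_X_pow_modByMonic_lt fun j hj hjq => ?_
    obtain ⟨A, rfl⟩ : ∃ A, j = (A + 1) * p ^ l + A := by
      refine ⟨j / (p ^ l + 1), ?_⟩
      have hdiv := Nat.div_add_mod j (p ^ l + 1)
      rw [hjq] at hdiv
      linarith
    have hA : A < p ^ l := by nlinarith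
    rw [CharP.cast_eq_zero_iff F p, hkwz]
    exact hp.dvd_choose_mul_pow_add hil hw hz1 hz hA

/-- Lemma 8: if `k = wq + z` with `0 ≤ z < q`, `0 ≤ k ≤ q^2`, and either `w = 0` or
there is `1 ≤ i ≤ l` with `p^i ∣ w` and `z ≢ -1 (mod p^i)`, then the remainder of
`t^k` modulo `p_{α,β}(t)` has degree `< q` (for any `α, β` such that `p_{α,β}` has
`q+1` distinct roots). -/
theorem degree_reduction_condition (p l q : ℕ) (hp : p.Prime) (hodd : Odd p) (hl : 1 ≤ l)
    (hq : q = p ^ l) (F : Type*) [Field F] [Fintype F] (hF : Fintype.card F = q ^ 2)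
    (α β : F) (σ : Fin (q + 1) → F) (hσinj : Function.Injective σ)
    (hσroot : ∀ i, (σ i) ^ (q + 1) + α ^ q * (σ i) ^ q + α * (σ i) + (β + β ^ q) = 0)
    (k w z : ℕ) (hk : k ≤ q ^ 2) (hkwz : k = w * q + z) (hz : z < q)
    (hcond : w = 0 ∨ ∃ i, 1 ≤ i ∧ i ≤ l ∧ p ^ i ∣ w ∧ ¬ (p ^ i ∣ (z + 1))) :
    ((X ^ k : F[X]) %ₘ
      (X ^ (q + 1) + C (α ^ q) * X ^ q + C α * X + C (β + β ^ q))).degree < (q : ℕ) :=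
  degree_reduction_condition_general p l q hp hq F hF α β k w z hk hkwz hz hcond
end

section
/- Let p be an odd prime, l ≥ 2, and q = p^l. Let a, b be natural numbers with a ≤ q−1 and b ≤ q^2−1 such that: (1) b = wq + b' for some natural numbers w < q and b' < p^{l−1} with p^i dividing w for some integer 1 ≤ i ≤ l; (2) a < p^{l−1}; and (3) there is some integer s with 0 ≤ s ≤ i−1 such that the s-th base-p digit of a and the s-th base-p digit of b' are both 0. Then the monomial M_{a,b}(x,y) = x^a·y^b is good: for all α, β ∈ F_{q^2} such that p_{α,β}(t) = t^{q+1} + α^q·t^q + α·t + (β + β^q) has q+1 distinct roots in F_{q^2}, the remainder of (αt+β)^a·t^b upon division by p_{α,β}(t) has degree at most q−1. -/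
/-!
Since `|F| = q²`, we have `α^{q²} = α`, so after the shift `t = u - α^q` the modulus becomes
`u^{q+1} + c` and `t^{wq}` becomes `(u^q - α)^w`. Writing `w = p^i w'`, Frobenius turns this into
`(u^{q p^i} - α^{p^i})^{w'}`, so the shifted `g` is a combination of the `u^{qk} h(u)` with
`p^i ∣ k < q`, where `h = (αu + β - α^{q+1})^a (u - α^q)^{b'}` has degree `< q`.
Modulo `u^{q+1} + c` the monomial `u^{qk+e}` (`e < q`) leaves a remainder of degree `< q` unless
`e + 1 = k`. By Lucas's theorem only exponents with `s`-th digit `0` survive in the two factors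
of `h`, so every exponent of `h` has `s`-th digit at most `1`; but `p^i ∣ e + 1` forces the
`s`-th digit of `e` to be `p - 1 ≥ 2`.
-/

open Polynomial Finset

namespace Nat

variable {p : ℕ}

lemma mod_pow_succ_lt_of_digit_eq_zero (hp : 0 < p) {x s : ℕ} (hx : x / p ^ s % p = 0) :
    x % p ^ (s + 1) < p ^ s := by
  rwa [← Nat.mod_mul_right_div_self, ← pow_succ, Nat.div_eq_zero_iff_lt (by positivity)] at hx

lemma not_pow_dvd_add_add_one (hp : 3 ≤ p) {x y s i : ℕ} (hs : s < i)
    (hx : x / p ^ s % p = 0) (hy : y / p ^ s % p = 0) : ¬ p ^ i ∣ x + y + 1 := by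
  intro hdvd
  have hxN := mod_pow_succ_lt_of_digit_eq_zero (by omega) hx
  have hyN := mod_pow_succ_lt_of_digit_eq_zero (by omega) hy
  have hN : 3 * p ^ s ≤ p ^ (s + 1) := by rw [pow_succ, mul_comm]; exact Nat.mul_le_mul_left _ hp
  have hdvd' : p ^ (s + 1) ∣ x % p ^ (s + 1) + y % p ^ (s + 1) + 1 := by
    have hsplit : x + y + 1 = (x % p ^ (s + 1) + y % p ^ (s + 1) + 1)
        + p ^ (s + 1) * (x / p ^ (s + 1) + y / p ^ (s + 1)) := by
      have := Nat.mod_add_div x (p ^ (s + 1)); have := Nat.mod_add_div y (p ^ (s + 1))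
      rw [mul_add]; omega
    rw [hsplit] at hdvd
    exact (Nat.dvd_add_left (dvd_mul_right _ _)).mp ((pow_dvd_pow p hs).trans hdvd)
  have hlt : x % p ^ (s + 1) + y % p ^ (s + 1) + 1 < p ^ (s + 1) := by omega
  exact absurd (Nat.eq_zero_of_dvd_of_lt hdvd' hlt) (Nat.succ_ne_zero _)

lemma cast_choose_eq_zero_of_digit_lt (R : Type*) [Semiring R] [CharP R p] [Fact p.Prime]
    {n k s : ℕ} (h : n / p ^ s % p < k / p ^ s % p) : (n.choose k : R) = 0 := by
  rw [CharP.cast_eq_zero_iff R p]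
  have hlucas := Choose.choose_modEq_choose_mul_prod_range_choose (p := p) (n := n) (k := k) (s + 1)
  have hzero : ∏ i ∈ range (s + 1), (n / p ^ i % p).choose (k / p ^ i % p) = 0 :=
    prod_eq_zero (mem_range.mpr s.lt_succ_self) (Nat.choose_eq_zero_of_lt h)
  rw [hzero, Nat.cast_zero, mul_zero] at hlucas
  exact_mod_cast Int.modEq_zero_iff_dvd.mp hlucas

lemma mul_add_mod_succ_ne {n k e : ℕ} (he : e < n) (hk : k ≤ n) (hek : e + 1 ≠ k) :
    (n * k + e) % (n + 1) ≠ n := by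
  intro h
  have hdvd : n + 1 ∣ n * k + e + 1 := by
    have := Nat.div_add_mod (n * k + e) (n + 1)
    exact ⟨(n * k + e) / (n + 1) + 1, by rw [mul_add]; omega⟩
  have hdvd' : (n + 1 : ℤ) ∣ (e + 1 - k : ℤ) := by
    have hsub : (e + 1 - k : ℤ) = (n * k + e + 1 : ℤ) - (n + 1) * k := by ring
    rw [hsub]
    exact (Int.natCast_dvd_natCast.mpr hdvd).sub (dvd_mul_right _ _)
  have := Int.eq_zero_of_abs_lt_dvd hdvd' (abs_lt.mpr ⟨by omega, by omega⟩)
  omega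

lemma WithBot.le_cast_sub_one_of_lt {n : ℕ} {d : WithBot ℕ} (h : d < n) :
    d ≤ ((n - 1 : ℕ) : WithBot ℕ) := by
  induction d using WithBot.recBotCoe with
  | bot => exact bot_le
  | coe k =>
    rw [Nat.cast_withBot, WithBot.coe_le_coe]
    rw [Nat.cast_withBot, WithBot.coe_lt_coe] at h
    omega

end Nat

namespace Polynomial

section Reduction

variable {R : Type*} [CommRing R] [Nontrivial R] {n : ℕ}

lemma X_pow_modByMonic_X_pow_add_C (c : R) (r : ℕ) {s : ℕ} (hs : s ≤ n) :
    X ^ ((n + 1) * r + s) %ₘ (X ^ (n + 1) + C c) = C ((-c) ^ r) * X ^ s := by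
  have hmonic : (X ^ (n + 1) + C c).Monic := monic_X_pow_add_C c n.succ_ne_zero
  rw [modByMonic_eq_of_dvd_sub hmonic (p₂ := C ((-c) ^ r) * X ^ s), modByMonic_eq_self_iff hmonic]
  · calc (C ((-c) ^ r) * X ^ s).degree ≤ (s : WithBot ℕ) := degree_C_mul_X_pow_le _ _
      _ < (X ^ (n + 1) + C c).degree := by
        rw [degree_X_pow_add_C n.succ_pos]; exact_mod_cast Nat.lt_succ_of_le hs
  · have h : X ^ (n + 1) - C (-c) ∣ (X ^ (n + 1)) ^ r - C (-c) ^ r := sub_dvd_pow_sub_pow _ _ _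
    rw [C_neg, sub_neg_eq_add] at h
    convert h.mul_left (X ^ s) using 1
    rw [C_pow, C_neg]; ring

lemma degree_X_pow_modByMonic_X_pow_add_C_lt (c : R) {m : ℕ} (hm : m % (n + 1) ≠ n) :
    (X ^ m %ₘ (X ^ (n + 1) + C c)).degree < n := by
  have hmod : m % (n + 1) ≤ n := Nat.lt_succ_iff.mp (Nat.mod_lt _ n.succ_pos)
  rw [← Nat.div_add_mod m (n + 1), X_pow_modByMonic_X_pow_add_C c _ hmod]
  exact (degree_C_mul_X_pow_le _ _).trans_lt (by exact_mod_cast lt_of_le_of_ne hmod hm)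

lemma degree_X_pow_mul_modByMonic_X_pow_add_C_lt (c : R) {h : R[X]} (hh : h.natDegree < n)
    {k : ℕ} (hk : k ≤ n) (hcoeff : ∀ e, e + 1 = k → h.coeff e = 0) :
    ((X ^ (n * k) * h) %ₘ (X ^ (n + 1) + C c)).degree < n := by
  rw [← mem_degreeLT, ← modByMonicHom_apply, as_sum_range' h n hh, mul_sum, map_sum]
  refine sum_mem fun e he => ?_
  rw [← C_mul_X_pow_eq_monomial, mul_left_comm, ← pow_add, ← smul_eq_C_mul, map_smul]
  by_cases hce : h.coeff e = 0
  · rw [hce, zero_smul]; exact zero_mem _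
  · exact Submodule.smul_mem _ _ (mem_degreeLT.mpr (degree_X_pow_modByMonic_X_pow_add_C_lt c
      (Nat.mul_add_mod_succ_ne (mem_range.mp he) hk (mt (hcoeff e) hce))))

lemma degree_X_pow_sub_C_pow_mul_modByMonic_X_pow_add_C_lt (c d : R) {h : R[X]}
    (hh : h.natDegree < n) {m w : ℕ} (hmw : m * w ≤ n) (hcoeff : ∀ e, m ∣ e + 1 → h.coeff e = 0) :
    (((X ^ (n * m) - C d) ^ w * h) %ₘ (X ^ (n + 1) + C c)).degree < n := by
  rw [← mem_degreeLT, ← modByMonicHom_apply, sub_pow, sum_mul, map_sum]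
  refine sum_mem fun j hj => ?_
  have hterm : (-1) ^ (j + w) * (X ^ (n * m)) ^ j * C d ^ (w - j) * (w.choose j : R[X]) * h
      = C ((-1) ^ (j + w) * d ^ (w - j) * w.choose j) * (X ^ (n * (m * j)) * h) := by
    simp only [C_mul, C_pow, C_neg, C_1, map_natCast, ← pow_mul, mul_assoc n]
    ring
  rw [hterm, ← smul_eq_C_mul, map_smul]
  refine Submodule.smul_mem _ _ (mem_degreeLT.mpr ?_)
  exact degree_X_pow_mul_modByMonic_X_pow_add_C_lt c hh
    ((Nat.mul_le_mul_left m (Nat.lt_succ_iff.mp (mem_range.mp hj))).trans hmw)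
    fun e he => hcoeff e (he ▸ dvd_mul_right m j)

end Reduction

section Taylor

variable {R : Type*} [CommRing R]

lemma taylor_modByMonic [Nontrivial R] (r : R) (f : R[X]) {g : R[X]} (hg : g.Monic) :
    taylor r f %ₘ taylor r g = taylor r (f %ₘ g) := by
  have hg' : (taylor r g).Monic := by rw [Monic, leadingCoeff_taylor]; exact hg
  rw [modByMonic_eq_of_dvd_sub hg' (p₂ := taylor r (f %ₘ g)), modByMonic_eq_self_iff hg',
    degree_taylor, degree_taylor]
  · exact degree_modByMonic_lt f hg
  · rw [← map_sub, ← eq_sub_of_add_eq' (modByMonic_add_div f g), taylor_mul]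
    exact dvd_mul_right _ _

lemma linear_pow_mul_X_pow_eq_taylor (x y r : R) (a b : ℕ) :
    (C x * X + C y) ^ a * X ^ b = taylor r ((C x * X + C (y - x * r)) ^ a * (X - C r) ^ b) := by
  simp only [taylor_mul, taylor_pow, map_add, map_sub, taylor_X, taylor_C, C_mul]
  ring

end Taylor

section Digits

variable {R : Type*} [CommRing R] {p : ℕ}

lemma coeff_linear_pow (x y : R) (n j : ℕ) :
    ((C x * X + C y) ^ n).coeff j = x ^ j * y ^ (n - j) * n.choose j := by
  have hcomp : C x * X + C y = (X + C y).comp (C x * X) := by simp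
  rw [hcomp, ← pow_comp, comp_C_mul_X_coeff, coeff_X_add_C_pow]
  ring

lemma coeff_linear_pow_eq_zero_of_digit [CharP R p] [Fact p.Prime] (x y : R) {n j s : ℕ}
    (hn : n / p ^ s % p = 0) (hj : j / p ^ s % p ≠ 0) : ((C x * X + C y) ^ n).coeff j = 0 := by
  rw [coeff_linear_pow, Nat.cast_choose_eq_zero_of_digit_lt R (s := s) (by omega), mul_zero]

lemma coeff_mul_eq_zero_of_digit (hp : 3 ≤ p) {s i : ℕ} (hs : s < i) {f g : R[X]}
    (hf : ∀ j, j / p ^ s % p ≠ 0 → f.coeff j = 0) (hg : ∀ j, j / p ^ s % p ≠ 0 → g.coeff j = 0)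
    {e : ℕ} (he : p ^ i ∣ e + 1) : (f * g).coeff e = 0 := by
  rw [coeff_mul]
  refine sum_eq_zero fun ⟨j, m⟩ hjm => ?_
  rw [HasAntidiagonal.mem_antidiagonal] at hjm
  dsimp only
  by_cases hj : j / p ^ s % p = 0
  · by_cases hm : m / p ^ s % p = 0
    · exact absurd (hjm ▸ he) (Nat.not_pow_dvd_add_add_one hp hs hj hm)
    · rw [hg m hm, mul_zero]
  · rw [hf j hj, zero_mul]

lemma coeff_linear_pow_mul_X_sub_C_pow_eq_zero [CharP R p] [Fact p.Prime] (hp : 3 ≤ p)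
    (x y r : R) {a b s i e : ℕ} (hs : s < i) (ha : a / p ^ s % p = 0) (hb : b / p ^ s % p = 0)
    (he : p ^ i ∣ e + 1) : ((C x * X + C y) ^ a * (X - C r) ^ b).coeff e = 0 := by
  rw [show X - C r = C 1 * X + C (-r) by simp [sub_eq_add_neg]]
  exact coeff_mul_eq_zero_of_digit hp hs (fun _ => coeff_linear_pow_eq_zero_of_digit _ _ ha)
    (fun _ => coeff_linear_pow_eq_zero_of_digit _ _ hb) he

end Digits

lemma natDegree_linear_pow_mul_X_sub_C_pow_le {R : Type*} [CommRing R] (x y r : R) (a b : ℕ) :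
    ((C x * X + C y) ^ a * (X - C r) ^ b).natDegree ≤ a + b := by
  simpa using natDegree_mul_le.trans (add_le_add (natDegree_pow_le_of_le a natDegree_linear_le)
    (natDegree_pow_le_of_le b (natDegree_X_sub_C_le r)))

section CharP

variable {R : Type*} [CommRing R] {p : ℕ} [Fact p.Prime] [CharP R p]

lemma X_pow_succ_add_eq_taylor {l q : ℕ} (hq : q = p ^ l) {α : R} (hα : α ^ (q * q) = α) (T : R) :
    X ^ (q + 1) + C (α ^ q) * X ^ q + C α * X + C T
      = taylor (α ^ q) (X ^ (q + 1) + C (T - α ^ (q + 1))) := by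
  have hfrob : (X + C (α ^ q)) ^ q = X ^ q + C α := by
    rw [hq, add_pow_char_pow, ← C_pow, ← pow_mul, ← hq, hα]
  rw [map_add, taylor_X_pow, taylor_C, pow_succ (X + C (α ^ q)), hfrob, C_sub, C_pow, C_pow]
  ring

lemma X_sub_C_pow_char_pow_mul (r : R) (m w : ℕ) :
    (X - C r) ^ (p ^ m * w) = (X ^ p ^ m - C (r ^ p ^ m)) ^ w := by
  rw [pow_mul, sub_pow_char_pow, C_pow]

end CharP

end Polynomial

theorem good_monomial_conditions_general (p l q : ℕ) (hp : p.Prime) (hodd : Odd p) (hl : 2 ≤ l)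
    (hq : q = p ^ l) (F : Type*) [Field F] [Fintype F] (hF : Fintype.card F = q ^ 2)
    (a b : ℕ) (ha' : a < p ^ (l - 1))
    (hcond : ∃ w b' i, b = w * q + b' ∧ w < q ∧ b' < p ^ (l - 1) ∧
      1 ≤ i ∧ i ≤ l ∧ p ^ i ∣ w ∧
      ∃ s, s ≤ i - 1 ∧ a / p ^ s % p = 0 ∧ b' / p ^ s % p = 0) :
    ∀ α β : F, ∀ σ : Fin (q + 1) → F, Function.Injective σ →
      (∀ i, (σ i) ^ (q + 1) + α ^ q * (σ i) ^ q + α * (σ i) + (β + β ^ q) = 0) →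
      (((C α * X + C β) ^ a * X ^ b : F[X]) %ₘ
        (X ^ (q + 1) + C (α ^ q) * X ^ q + C α * X + C (β + β ^ q))).degree
          ≤ ((q - 1 : ℕ) : WithBot ℕ) := by
  intro α β _ _ _
  obtain ⟨_, b', i, rfl, hw, hb', hi, -, ⟨w, rfl⟩, s, hs, ha0, hb0⟩ := hcond
  have : Fact p.Prime := ⟨hp⟩
  have : CharP F p := charP_of_card_eq_prime_pow (f := l * 2) (by rw [hF, hq, pow_mul])
  have hp3 : 3 ≤ p := by have := hp.two_le; have := Nat.odd_iff.mp hodd; omega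
  have hqp : q = p ^ (l - 1) * p := by rw [hq, ← pow_succ, Nat.sub_add_cancel (by omega)]
  have hα : α ^ (q * q) = α := by rw [← sq, ← hF, FiniteField.pow_card]
  set h := (C α * X + C (β - α * α ^ q)) ^ a * (X - C (α ^ q)) ^ b' with h_def
  have hfactor : (C α * X + C (β - α * α ^ q)) ^ a * (X - C (α ^ q)) ^ (p ^ i * w * q + b')
      = (X ^ (q * p ^ i) - C ((α ^ q) ^ (q * p ^ i))) ^ w * h := by
    rw [pow_add, show p ^ i * w * q = p ^ (l + i) * w by rw [hq, pow_add]; ring,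
      X_sub_C_pow_char_pow_mul, pow_add, ← hq, h_def]
    ring
  have hh : h.natDegree < q := (natDegree_linear_pow_mul_X_sub_C_pow_le _ _ _ a b').trans_lt
    (by rw [hqp]; nlinarith)
  have hcoeff : ∀ e, p ^ i ∣ e + 1 → h.coeff e = 0 := fun e he =>
    coeff_linear_pow_mul_X_sub_C_pow_eq_zero hp3 _ _ _ (by omega) ha0 hb0 he
  rw [X_pow_succ_add_eq_taylor hq hα, linear_pow_mul_X_pow_eq_taylor _ _ (α ^ q),
    taylor_modByMonic _ _ (monic_X_pow_add_C _ q.succ_ne_zero), degree_taylor, hfactor]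
  exact Nat.WithBot.le_cast_sub_one_of_lt
    (degree_X_pow_sub_C_pow_mul_modByMonic_X_pow_add_C_lt _ _ hh hw.le hcoeff)

/-- Lemma 9 (sufficient conditions for good monomials): if `a ≤ q-1`, `b ≤ q^2-1`,
`b = wq + b'` with `w < q`, `b' < p^(l-1)`, `p^i ∣ w` for some `1 ≤ i ≤ l`,
`a < p^(l-1)`, and for some `0 ≤ s ≤ i-1` the `s`-th base-`p` digits of both `a` and `b'`
vanish, then `M_{a,b} = x^a y^b` is good: for every secant line `L_{α,β}`, the remainder of
`(αt+β)^a t^b` modulo `p_{α,β}(t)` has degree at most `q-1`. -/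
theorem good_monomial_conditions (p l q : ℕ) (hp : p.Prime) (hodd : Odd p) (hl : 2 ≤ l)
    (hq : q = p ^ l) (F : Type*) [Field F] [Fintype F] (hF : Fintype.card F = q ^ 2)
    (a b : ℕ) (ha : a ≤ q - 1) (hb : b ≤ q ^ 2 - 1) (ha' : a < p ^ (l - 1))
    (hcond : ∃ w b' i, b = w * q + b' ∧ w < q ∧ b' < p ^ (l - 1) ∧
      1 ≤ i ∧ i ≤ l ∧ p ^ i ∣ w ∧
      ∃ s, s ≤ i - 1 ∧ a / p ^ s % p = 0 ∧ b' / p ^ s % p = 0) :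
    ∀ α β : F, ∀ σ : Fin (q + 1) → F, Function.Injective σ →
      (∀ i, (σ i) ^ (q + 1) + α ^ q * (σ i) ^ q + α * (σ i) + (β + β ^ q) = 0) →
      (((C α * X + C β) ^ a * X ^ b : F[X]) %ₘ
        (X ^ (q + 1) + C (α ^ q) * X ^ q + C α * X + C (β + β ^ q))).degree
          ≤ ((q - 1 : ℕ) : WithBot ℕ) :=
  good_monomial_conditions_general p l q hp hodd hl hq F hF a b ha' hcond
end

section
/- Let p be an odd prime, l ≥ 2, and q = p^l. Let S be the set of pairs of natural numbers (a, b) with a ≤ q−1, b ≤ q^2−1 satisfying: (1) b = wq + b' for some natural numbers w < q and b' < p^{l−1} with p^i dividing w for some integer 1 ≤ i ≤ l; (2) a < p^{l−1}; and (3) there is some integer s with 0 ≤ s ≤ i−1 such that the s-th base-p digits of a and of b' are both 0. Then the cardinality of S is at least 0.469·q^3 / (p^4·(p−1)·(p^3−p^2+1)) (as an inequality of real numbers). -/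
/-- Counting good monomials: the set of pairs `(a,b)` satisfying the sufficient
conditions of Lemma 9 has cardinality at least `0.469 q^3 / (p^4 (p-1)(p^3-p^2+1))`. -/
theorem good_monomial_count (p l q : ℕ) (hp : p.Prime) (hodd : Odd p) (hl : 2 ≤ l)
    (hq : q = p ^ l) :
    (0.469 : ℝ) * q ^ 3 / (p ^ 4 * (p - 1) * (p ^ 3 - p ^ 2 + 1)) ≤
      Nat.card {ab : ℕ × ℕ // ab.1 ≤ q - 1 ∧ ab.2 ≤ q ^ 2 - 1 ∧ ab.1 < p ^ (l - 1) ∧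
        ∃ w b' i, ab.2 = w * q + b' ∧ w < q ∧ b' < p ^ (l - 1) ∧
          1 ≤ i ∧ i ≤ l ∧ p ^ i ∣ w ∧
          ∃ s, s ≤ i - 1 ∧ ab.1 / p ^ s % p = 0 ∧ b' / p ^ s % p = 0} := by
  have hp3 : 3 ≤ p := by
    have h2 := hp.two_le
    have h := Nat.odd_iff.mp hodd
    omega
  obtain ⟨m, rfl⟩ : ∃ m, l = m + 2 := ⟨l - 2, by omega⟩
  subst hq
  set P : ℕ × ℕ → Prop := fun ab =>
    ab.1 ≤ p ^ (m + 2) - 1 ∧ ab.2 ≤ (p ^ (m + 2)) ^ 2 - 1 ∧ ab.1 < p ^ (m + 2 - 1) ∧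
      ∃ w b' i, ab.2 = w * p ^ (m + 2) + b' ∧ w < p ^ (m + 2) ∧ b' < p ^ (m + 2 - 1) ∧
        1 ≤ i ∧ i ≤ m + 2 ∧ p ^ i ∣ w ∧
        ∃ s, s ≤ i - 1 ∧ ab.1 / p ^ s % p = 0 ∧ b' / p ^ s % p = 0 with hP
  have hppos : 0 < p := by omega
  have hQ1 : 1 ≤ p ^ (m + 2) := Nat.one_le_pow _ _ hppos
  have hpm1 : p * p ^ m = p ^ (m + 1) := by ring
  have hpm2 : p * p ^ (m + 1) = p ^ (m + 2) := by ring
  have hm1le : p ^ (m + 1) ≤ p ^ (m + 2) := Nat.pow_le_pow_right hppos (by omega)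
  have hfin : Finite {ab : ℕ × ℕ // P ab} := by
    have hsub : {ab : ℕ × ℕ | P ab} ⊆ Set.Iic (p ^ (m + 2) - 1, (p ^ (m + 2)) ^ 2 - 1) := by
      rintro ⟨a, b⟩ ⟨h1, h2, _⟩
      exact ⟨h1, h2⟩
    exact (Set.Finite.subset (Set.finite_Iic _) hsub).to_subtype
  -- the explicit family
  have key : ∀ x : Fin (p ^ m) × Fin (p ^ m) × Fin (p ^ (m + 1)),
      P (p * x.1.1, (p * x.2.2.1) * p ^ (m + 2) + p * x.2.1.1) := by
    rintro ⟨⟨a0, ha0⟩, ⟨b0, hb0⟩, ⟨k, hk⟩⟩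
    have ha : p * a0 < p ^ (m + 1) := by
      have h := mul_lt_mul_of_pos_left ha0 hppos
      omega
    have hb' : p * b0 < p ^ (m + 1) := by
      have h := mul_lt_mul_of_pos_left hb0 hppos
      omega
    have hw : p * k < p ^ (m + 2) := by
      have h := mul_lt_mul_of_pos_left hk hppos
      omega
    rw [hP]
    refine ⟨?_, ?_, ?_, ?_⟩
    · show p * a0 ≤ p ^ (m + 2) - 1
      omega
    · show (p * k) * p ^ (m + 2) + p * b0 ≤ (p ^ (m + 2)) ^ 2 - 1
      have hA : (p * k) * p ^ (m + 2) + p * b0 < p ^ (m + 2) * p ^ (m + 2) := by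
        calc (p * k) * p ^ (m + 2) + p * b0 < (p * k) * p ^ (m + 2) + p ^ (m + 2) := by omega
          _ = (p * k + 1) * p ^ (m + 2) := by ring
          _ ≤ p ^ (m + 2) * p ^ (m + 2) := Nat.mul_le_mul_right _ hw
      have hsq : (p ^ (m + 2)) ^ 2 = p ^ (m + 2) * p ^ (m + 2) := sq _
      omega
    · show p * a0 < p ^ (m + 2 - 1)
      exact ha
    · refine ⟨p * k, p * b0, 1, rfl, hw, hb', le_refl 1, by omega,
        ⟨k, by ring⟩, 0, by omega, ?_, ?_⟩
      · simp [Nat.mul_mod_right]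
      · simp [Nat.mul_mod_right]
  let f : Fin (p ^ m) × Fin (p ^ m) × Fin (p ^ (m + 1)) → {ab : ℕ × ℕ // P ab} :=
    fun x => ⟨(p * x.1.1, (p * x.2.2.1) * p ^ (m + 2) + p * x.2.1.1), key x⟩
  have hinj : Function.Injective f := by
    rintro ⟨⟨a0, ha0⟩, ⟨b0, hb0⟩, ⟨k, hk⟩⟩ ⟨⟨a0', ha0'⟩, ⟨b0', hb0'⟩, ⟨k', hk'⟩⟩ hfeq
    have hv := congrArg Subtype.val hfeq
    have h1 : p * a0 = p * a0' := congrArg Prod.fst hv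
    have h2 : (p * k) * p ^ (m + 2) + p * b0 = (p * k') * p ^ (m + 2) + p * b0' :=
      congrArg Prod.snd hv
    have hb'lt : p * b0 < p ^ (m + 2) := by
      have h3 := mul_lt_mul_of_pos_left hb0 hppos
      omega
    have hb'lt' : p * b0' < p ^ (m + 2) := by
      have h3 := mul_lt_mul_of_pos_left hb0' hppos
      omega
    have e1 : ((p * k) * p ^ (m + 2) + p * b0) / p ^ (m + 2) = p * k := by
      rw [add_comm, Nat.add_mul_div_right _ _ (show 0 < p ^ (m + 2) by omega),
        Nat.div_eq_of_lt hb'lt, zero_add]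
    have e2 : ((p * k') * p ^ (m + 2) + p * b0') / p ^ (m + 2) = p * k' := by
      rw [add_comm, Nat.add_mul_div_right _ _ (show 0 < p ^ (m + 2) by omega),
        Nat.div_eq_of_lt hb'lt', zero_add]
    have hkk' : p * k = p * k' := by rw [← e1, ← e2, h2]
    have hbb : p * b0 = p * b0' := by
      rw [hkk'] at h2
      exact Nat.add_left_cancel h2
    have hkk : k = k' := Nat.eq_of_mul_eq_mul_left hppos hkk'
    have ha : a0 = a0' := Nat.eq_of_mul_eq_mul_left hppos h1
    have hbb' : b0 = b0' := Nat.eq_of_mul_eq_mul_left hppos hbb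
    subst ha; subst hkk; subst hbb'; rfl
  have hcard : p ^ (3 * m + 1) ≤ Nat.card {ab : ℕ × ℕ // P ab} := by
    have hle := Nat.card_le_card_of_injective f hinj
    have hsrc : Nat.card (Fin (p ^ m) × Fin (p ^ m) × Fin (p ^ (m + 1)))
        = p ^ (3 * m + 1) := by
      simp [Nat.card_prod]
      ring
    omega
  -- now the real-number estimate
  have hgoal : (0.469 : ℝ) * ((p : ℝ) ^ (m + 2)) ^ 3 /
      ((p : ℝ) ^ 4 * ((p : ℝ) - 1) * ((p : ℝ) ^ 3 - (p : ℝ) ^ 2 + 1))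
      ≤ ((p : ℝ)) ^ (3 * m + 1) := by
    have hx : (3 : ℝ) ≤ (p : ℝ) := by exact_mod_cast hp3
    have hd1 : (0 : ℝ) < (p : ℝ) ^ 4 := pow_pos (by linarith) 4
    have hd2 : (0 : ℝ) < (p : ℝ) - 1 := by linarith
    have hd3 : (0 : ℝ) < (p : ℝ) ^ 3 - (p : ℝ) ^ 2 + 1 := by
      have h := mul_pos (pow_pos (show (0:ℝ) < p by linarith) 2) hd2
      nlinarith [h]
    have hden : (0 : ℝ) < (p : ℝ) ^ 4 * ((p : ℝ) - 1) * ((p : ℝ) ^ 3 - (p : ℝ) ^ 2 + 1) :=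
      mul_pos (mul_pos hd1 hd2) hd3
    rw [div_le_iff₀ hden]
    have hrppos : (0 : ℝ) < (p : ℝ) := by linarith
    have hpowpos : (0 : ℝ) < (p : ℝ) ^ (3 * m + 5) := pow_pos hrppos _
    have hexp : ((p : ℝ) ^ (m + 2)) ^ 3 = (p : ℝ) ^ (3 * m + 5) * (p : ℝ) := by
      rw [← pow_mul, ← pow_succ]
      congr 1
      omega
    have hexp2 : (p : ℝ) ^ (3 * m + 1) * (p : ℝ) ^ 4 = (p : ℝ) ^ (3 * m + 5) := by
      rw [← pow_add]
    have hkey : (0.469 : ℝ) * (p : ℝ) ≤ ((p : ℝ) - 1) * ((p : ℝ) ^ 3 - (p : ℝ) ^ 2 + 1) := by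
      nlinarith [sq_nonneg ((p:ℝ) - 1), sq_nonneg (p:ℝ)]
    calc (0.469 : ℝ) * ((p : ℝ) ^ (m + 2)) ^ 3
        = (p : ℝ) ^ (3 * m + 5) * ((0.469 : ℝ) * (p : ℝ)) := by rw [hexp]; ring
      _ ≤ (p : ℝ) ^ (3 * m + 5) * (((p : ℝ) - 1) * ((p : ℝ) ^ 3 - (p : ℝ) ^ 2 + 1)) :=
          mul_le_mul_of_nonneg_left hkey (le_of_lt hpowpos)
      _ = (p : ℝ) ^ (3 * m + 1) *
          ((p : ℝ) ^ 4 * ((p : ℝ) - 1) * ((p : ℝ) ^ 3 - (p : ℝ) ^ 2 + 1)) := by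
          rw [← hexp2]; ring
  have hfinal : ((p : ℝ)) ^ (3 * m + 1) ≤ (Nat.card {ab : ℕ × ℕ // P ab} : ℝ) := by
    exact_mod_cast hcard
  calc (0.469 : ℝ) * ((p ^ (m + 2) : ℕ) : ℝ) ^ 3 /
      ((p : ℝ) ^ 4 * ((p : ℝ) - 1) * ((p : ℝ) ^ 3 - (p : ℝ) ^ 2 + 1))
      ≤ ((p : ℝ)) ^ (3 * m + 1) := by
        have hc : ((p ^ (m + 2) : ℕ) : ℝ) = (p : ℝ) ^ (m + 2) := by push_cast; ring
        rw [hc]; exact hgoal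
    _ ≤ (Nat.card {ab : ℕ × ℕ // P ab} : ℝ) := hfinal
end

section
/- For every integer p ≥ 3 and every integer l ≥ 2, the following inequality of real numbers holds: 1 − (p^3−p^2+1)·(1/p)^l + (p^3−p^2)·((p^2−1)/p^3)^l ≥ 0.469. -/
/-!
With `u = 1/p` and `v = (p²-1)/p³` the expression is `1 - a uˡ + b vˡ`, where `a = p³-p²+1` and
`b = p³-p²` satisfy `a (1-u) = b (1-v)`. Hence its increment from `l` to `l+1` is
`a (1-u) (uˡ - vˡ) ≥ 0`, so it is increasing in `l`, and at `l = 2` it equals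
`(p-1)(p³-p²+1)/p⁴`, which for `p ≥ 3` is at least its value `38/81 > 0.469` at `p = 3`.
-/

theorem monotone_neg_mul_pow_add_mul_pow {a b u v : ℝ} (hv : 0 ≤ v) (hvu : v ≤ u)
    (hau : 0 ≤ a * (1 - u)) (hab : a * (1 - u) = b * (1 - v)) :
    Monotone fun n : ℕ => -(a * u ^ n) + b * v ^ n := by
  refine monotone_nat_of_le_succ fun n => ?_
  have hpow : v ^ n ≤ u ^ n := pow_le_pow_left₀ hv hvu n
  have increment : (-(a * u ^ (n + 1)) + b * v ^ (n + 1)) - (-(a * u ^ n) + b * v ^ n) =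
      a * (1 - u) * (u ^ n - v ^ n) := by
    linear_combination v ^ n * hab
  nlinarith [mul_nonneg hau (sub_nonneg.2 hpow)]

noncomputable def numerator (x : ℝ) (n : ℕ) : ℝ :=
  1 - (x ^ 3 - x ^ 2 + 1) * (1 / x) ^ n + (x ^ 3 - x ^ 2) * ((x ^ 2 - 1) / x ^ 3) ^ n

theorem numerator_monotone {x : ℝ} (hx : 1 ≤ x) : Monotone (numerator x) := by
  have hx0 : 0 < x := by linarith
  have hv : 0 ≤ (x ^ 2 - 1) / x ^ 3 := div_nonneg (by nlinarith) (by positivity)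
  have hvu : (x ^ 2 - 1) / x ^ 3 ≤ 1 / x := by
    rw [div_le_div_iff₀ (by positivity) hx0]; nlinarith
  have hau : 0 ≤ (x ^ 3 - x ^ 2 + 1) * (1 - 1 / x) := by
    have : 1 / x ≤ 1 := by rw [div_le_one hx0]; exact hx
    have : x ^ 2 ≤ x ^ 3 := pow_le_pow_right₀ hx (by norm_num)
    apply mul_nonneg <;> linarith
  have hab : (x ^ 3 - x ^ 2 + 1) * (1 - 1 / x) = (x ^ 3 - x ^ 2) * (1 - (x ^ 2 - 1) / x ^ 3) := by
    field_simp; ring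
  intro m n hmn
  have := monotone_neg_mul_pow_add_mul_pow hv hvu hau hab hmn
  simp only [numerator]
  linarith

theorem numerator_two {x : ℝ} (hx : x ≠ 0) :
    numerator x 2 = (x - 1) * (x ^ 3 - x ^ 2 + 1) / x ^ 4 := by
  unfold numerator; field_simp; ring

theorem le_numerator_two {x : ℝ} (hx : 3 ≤ x) : 0.469 ≤ numerator x 2 := by
  rw [numerator_two (by positivity), le_div_iff₀ (by positivity)]
  have hd : 0 ≤ x - 3 := by linarith
  nlinarith [pow_nonneg hd 2, pow_nonneg hd 3, pow_nonneg hd 4]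

/-- Numerical bound used in the main theorem: for integers `p ≥ 3` and `l ≥ 2`,
`1 - (p^3-p^2+1)(1/p)^l + (p^3-p^2)((p^2-1)/p^3)^l ≥ 0.469`. -/
theorem numerator_lower_bound (p l : ℤ) (hp : 3 ≤ p) (hl : 2 ≤ l) :
    (0.469 : ℝ) ≤
      1 - ((p : ℝ) ^ 3 - (p : ℝ) ^ 2 + 1) * (1 / (p : ℝ)) ^ l +
        ((p : ℝ) ^ 3 - (p : ℝ) ^ 2) * (((p : ℝ) ^ 2 - 1) / (p : ℝ) ^ 3) ^ l := by
  have hx : (3 : ℝ) ≤ p := by exact_mod_cast hp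
  lift l to ℕ using by omega
  simp only [zpow_natCast]
  calc (0.469 : ℝ) ≤ numerator p 2 := le_numerator_two hx
    _ ≤ numerator p l := numerator_monotone (by linarith) (by exact_mod_cast hl)
end

section
/- Let q = 2^l with l ≥ 2. Then the rate of the Hermitian-lifted code C_q (its F_{q^2}-dimension divided by its length q^3) is at least 0.007. -/
/-!
In characteristic 2 the squared monomials `x^(2a) y^(2(b + q c))` with `2(a + b) < q` and
`2c < q` lie in the code. On the line `(αt + β, t)` the substitution `u = t + α^q` turns the
parameter equation into `u^(q+1) = d` and the monomial into a combination of powers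
`u^(2(i + j) + 2qk)` with `i + j ≤ a + b`, `k ≤ c`. Modulo `q + 1` such an exponent is congruent
to the even number `2(i + j) - 2k ∈ (-q, q)`, so it is never `≡ q ≡ -1`, and reducing with
`u^(q+1) = d` leaves a polynomial of degree `< q`.

The monomials `x^i y^j` with `i < q`, `j < q^2` are linearly independent on the curve, because
every fibre `x^q + x = -y^(q+1)` has exactly `q` points (`X^q + X + y^(q+1)` divides
`X^(q^2) - X`). Taking `a, b < q/4` and `c < q/2` gives `q^3/32` independent codewords.
-/

open Polynomial

theorem Polynomial.exists_natDegree_le_eval_eq_of_pow_eq {R ι : Type*} [CommRing R]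
    (s : Finset ι) (c : ι → R) (e : ι → ℕ) {n m : ℕ} (d : R) (he : ∀ i ∈ s, e i % n ≤ m) :
    ∃ r : R[X], r.natDegree ≤ m ∧
      ∀ u : R, u ^ n = d → r.eval u = ∑ i ∈ s, c i * u ^ e i := by
  refine ⟨∑ i ∈ s, C (c i * d ^ (e i / n)) * X ^ (e i % n),
    natDegree_sum_le_of_forall_le _ _ fun i hi => (natDegree_C_mul_X_pow_le _ _).trans (he i hi),
    fun u hu => ?_⟩
  simp only [eval_finsetSum, eval_mul, eval_C, eval_pow, eval_X]
  refine Finset.sum_congr rfl fun i _ => ?_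
  rw [← hu, mul_assoc, ← pow_mul, ← pow_add, Nat.div_add_mod]

theorem Nat.two_mul_add_mul_two_mul_mod_succ_lt {q s j : ℕ} (hs : 2 * s < q) (hj : 2 * j < q) :
    (2 * s + q * (2 * j)) % (q + 1) < q := by
  rcases le_or_gt j s with hjs | hsj
  · obtain ⟨t, rfl⟩ := Nat.exists_eq_add_of_le hjs
    rw [show 2 * (j + t) + q * (2 * j) = 2 * t + 2 * j * (q + 1) by ring,
      Nat.add_mul_mod_self_right, Nat.mod_eq_of_lt (by omega)]
    omega
  · obtain ⟨t, rfl⟩ := Nat.exists_eq_add_of_lt hsj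
    obtain ⟨w, rfl⟩ : ∃ w, q = 2 * s + 2 * t + 3 + w := ⟨q - (2 * s + 2 * t + 3), by omega⟩
    rw [show 2 * s + (2 * s + 2 * t + 3 + w) * (2 * (s + t + 1)) =
        (2 * s + w + 2) + (2 * s + 2 * t + 1) * (2 * s + 2 * t + 3 + w + 1) by ring,
      Nat.add_mul_mod_self_right, Nat.mod_eq_of_lt (by omega)]
    omega

theorem Polynomial.card_roots_toFinset_eq_natDegree_of_dvd_X_pow_card_sub_X {K : Type*} [Field K]
    [Fintype K] [DecidableEq K] {f : K[X]} (hf : f ∣ X ^ Fintype.card K - X) :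
    f.roots.toFinset.card = f.natDegree := by
  have hK := Fintype.one_lt_card (α := K)
  have hne := FiniteField.X_pow_card_sub_X_ne_zero K hK
  have hsplit : (X ^ Fintype.card K - X : K[X]).Splits := by
    rw [splits_iff_card_roots, FiniteField.roots_X_pow_card_sub_X,
      FiniteField.X_pow_card_sub_X_natDegree_eq K hK]
    rfl
  have hnodup : f.roots.Nodup := Multiset.nodup_of_le (roots.le_of_dvd hne hf)
    (FiniteField.roots_X_pow_card_sub_X K ▸ Finset.univ.nodup)
  rw [Multiset.toFinset_card_of_nodup hnodup, ← splits_iff_card_roots.mp (hsplit.of_dvd hne hf)]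

abbrev HermitianCurvePoints (F : Type*) [Field F] (q : ℕ) :=
  {pt : F × F // pt.1 ^ q + pt.1 + pt.2 ^ (q + 1) = 0}

section HermitianCurve

variable {F : Type*} [Field F] [Fintype F] {p n q : ℕ} [ExpChar F p]

theorem X_pow_add_X_sub_C_dvd_X_pow_card_sub_X (hq : q = p ^ n)
    (hF : Fintype.card F = q ^ 2) {z : F} (hz : z ^ q = z) :
    X ^ q + X - C z ∣ (X ^ Fintype.card F - X : F[X]) := by
  have hfrob : (X ^ q + X : F[X]) ^ q = X ^ Fintype.card F + X ^ q := by
    rw [hF, hq, ← iterateFrobenius_def, map_add, iterateFrobenius_def, iterateFrobenius_def,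
      ← pow_mul, sq]
  have hdvd := sub_dvd_pow_sub_pow (X ^ q + X : F[X]) (C z) q
  rw [← C_pow, hz] at hdvd
  have := dvd_sub hdvd (dvd_refl (X ^ q + X - C z))
  rw [hfrob] at this
  convert this using 1
  ring

theorem exists_injective_hermitian_fiber (hq : q = p ^ n) (hF : Fintype.card F = q ^ 2) (y : F) :
    ∃ x : Fin q → F, Function.Injective x ∧ ∀ i, x i ^ q + x i + y ^ (q + 1) = 0 := by
  classical
  have hq1 : 1 < q := by
    by_contra! h
    have := Fintype.one_lt_card (α := F)
    rw [hF] at this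
    interval_cases q <;> simp at this
  set z := -y ^ (q + 1)
  have hz : z ^ q = z := by
    rw [hq, ← iterateFrobenius_def (p := p), map_neg, iterateFrobenius_def, ← hq, ← pow_mul,
      show (q + 1) * q = q ^ 2 + q by ring, pow_add, ← hF, FiniteField.pow_card, ← pow_succ']
  set f : F[X] := X ^ q + X - C z
  have hdeg : f.natDegree = q := by
    rw [show f = X ^ q + (X - C z) by ring, natDegree_add_eq_left_of_natDegree_lt] <;>
      rw [natDegree_X_pow]
    rwa [natDegree_X_sub_C]
  have hcard := card_roots_toFinset_eq_natDegree_of_dvd_X_pow_card_sub_X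
    (X_pow_add_X_sub_C_dvd_X_pow_card_sub_X hq hF hz)
  rw [hdeg] at hcard
  have hf0 : f ≠ 0 := fun h => by simp [h] at hdeg; omega
  let e := Finset.equivFinOfCardEq hcard
  refine ⟨fun i => (e.symm i : F), Subtype.val_injective.comp e.symm.injective, fun i => ?_⟩
  have hroot := (e.symm i).2
  rw [Multiset.mem_toFinset, mem_roots hf0, IsRoot.def] at hroot
  simp only [f, z, eval_sub, eval_add, eval_pow, eval_X, eval_C, sub_neg_eq_add] at hroot
  exact hroot

theorem linearIndependent_hermitian_monomial (hq : q = p ^ n) (hF : Fintype.card F = q ^ 2) :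
    LinearIndependent F (fun e : Fin q × Fin (q ^ 2) =>
      fun P : HermitianCurvePoints F q => P.1.1 ^ (e.1 : ℕ) * P.1.2 ^ (e.2 : ℕ)) := by
  rw [Fintype.linearIndependent_iff]
  intro g hg
  have hrow : ∀ y : F, ∀ i : Fin q, ∑ j : Fin (q ^ 2), g (i, j) * y ^ (j : ℕ) = 0 := by
    intro y
    obtain ⟨x, hx_inj, hx⟩ := exists_injective_hermitian_fiber hq hF y
    refine congrFun (Matrix.eq_zero_of_forall_index_sum_mul_pow_eq_zero hx_inj fun k => ?_)
    have := congrFun hg ⟨(x k, y), hx k⟩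
    simp only [Finset.sum_apply, Pi.smul_apply, smul_eq_mul, Fintype.sum_prod_type,
      Pi.zero_apply] at this
    rw [← this]
    refine Finset.sum_congr rfl fun i _ => ?_
    rw [Finset.sum_mul]
    exact Finset.sum_congr rfl fun j _ => by ring
  rintro ⟨i, j⟩
  let enum := (Fintype.equivFinOfCardEq hF).symm
  exact congrFun (Matrix.eq_zero_of_forall_index_sum_mul_pow_eq_zero enum.injective
    fun k => hrow (enum k) i) j

end HermitianCurve

section CharTwo

variable {F : Type*} [Field F] [Fintype F] [CharP F 2] {l q : ℕ}

theorem pow_add_pow_succ_eq_of_line_root (hq : q = 2 ^ l) (hF : Fintype.card F = q ^ 2)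
    {α β t : F} (ht : t ^ (q + 1) + α ^ q * t ^ q + α * t + (β + β ^ q) = 0) :
    (t + α ^ q) ^ (q + 1) = α ^ (q + 1) + β + β ^ q := by
  have hfrob : (t + α ^ q) ^ q = t ^ q + α := by
    rw [hq, ← iterateFrobenius_def, map_add, iterateFrobenius_def, iterateFrobenius_def, ← hq,
      ← pow_mul, ← sq, ← hF, FiniteField.pow_card]
  rw [pow_succ, hfrob]
  linear_combination ht - (β + β ^ q) * CharTwo.two_eq_zero (R := F)

theorem exists_sum_pow_eq_line_sq_monomial (hq : q = 2 ^ l) (hF : Fintype.card F = q ^ 2)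
    (a b c : ℕ) (α β : F) :
    ∃ coeff : ℕ × ℕ × ℕ → F, ∀ t : F,
      (α * t + β) ^ (2 * a) * t ^ (2 * (b + q * c)) =
        ∑ x ∈ Finset.range (a + 1) ×ˢ Finset.range (b + 1) ×ˢ Finset.range (c + 1),
          coeff x * (t + α ^ q) ^ (2 * (x.1 + x.2.1) + q * (2 * x.2.2)) := by
  obtain ⟨γ, hγ⟩ : ∃ γ, γ = α ^ (q + 1) + β := ⟨_, rfl⟩
  refine ⟨fun x => (a.choose x.1 * b.choose x.2.1 * c.choose x.2.2 : F) * (α ^ 2) ^ x.1 *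
    (γ ^ 2) ^ (a - x.1) * ((α ^ q) ^ 2) ^ (b - x.2.1) * (α ^ 2) ^ (c - x.2.2), fun t => ?_⟩
  obtain ⟨u, hu⟩ : ∃ u, u = t + α ^ q := ⟨_, rfl⟩
  rw [← hu]
  have h2 : (2 : F) = 0 := CharTwo.two_eq_zero
  have hx : α * t + β = α * u + γ := by linear_combination -α * hu - hγ - α ^ (q + 1) * h2
  have ht : t = u + α ^ q := by linear_combination -hu - α ^ q * h2
  have htq : t ^ q = u ^ q + α := by
    rw [ht, hq, ← iterateFrobenius_def, map_add, iterateFrobenius_def, iterateFrobenius_def, ← hq,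
      ← pow_mul, ← sq, ← hF, FiniteField.pow_card]
  have hsplit : (α * t + β) ^ (2 * a) * t ^ (2 * (b + q * c)) =
      (α ^ 2 * u ^ 2 + γ ^ 2) ^ a * ((u ^ 2 + (α ^ q) ^ 2) ^ b * ((u ^ q) ^ 2 + α ^ 2) ^ c) := by
    rw [show t ^ (2 * (b + q * c)) = (t ^ 2) ^ b * ((t ^ q) ^ 2) ^ c by ring, htq, hx, ht, pow_mul]
    simp only [CharTwo.add_sq, mul_pow]
  rw [hsplit, add_pow (α ^ 2 * u ^ 2), add_pow (u ^ 2), add_pow ((u ^ q) ^ 2),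
    Finset.sum_mul_sum, Finset.sum_mul_sum]
  simp only [Finset.mul_sum, Finset.sum_product]
  refine Finset.sum_congr rfl fun i _ => Finset.sum_congr rfl fun j _ =>
    Finset.sum_congr rfl fun k _ => ?_
  ring

theorem exists_degree_le_eval_eq_line_sq_monomial (hq : q = 2 ^ l) (hF : Fintype.card F = q ^ 2)
    {a b c : ℕ} (hab : 2 * (a + b) < q) (hc : 2 * c < q) (α β : F) :
    ∃ g : F[X], g.degree ≤ ((q - 1 : ℕ) : WithBot ℕ) ∧
      ∀ t : F, t ^ (q + 1) + α ^ q * t ^ q + α * t + (β + β ^ q) = 0 →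
        (α * t + β) ^ (2 * a) * t ^ (2 * (b + q * c)) = g.eval t := by
  obtain ⟨coeff, hcoeff⟩ := exists_sum_pow_eq_line_sq_monomial hq hF a b c α β
  obtain ⟨r, hr, hreval⟩ := exists_natDegree_le_eval_eq_of_pow_eq
    (Finset.range (a + 1) ×ˢ Finset.range (b + 1) ×ˢ Finset.range (c + 1)) coeff
    (fun x => 2 * (x.1 + x.2.1) + q * (2 * x.2.2)) (n := q + 1) (m := q - 1)
    (α ^ (q + 1) + β + β ^ q) fun x hx => by
      simp only [Finset.mem_product, Finset.mem_range] at hx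
      have := Nat.two_mul_add_mul_two_mul_mod_succ_lt (q := q) (s := x.1 + x.2.1) (j := x.2.2)
        (by omega) (by omega)
      omega
  refine ⟨r.comp (X + C (α ^ q)), degree_le_of_natDegree_le ?_, fun t ht => ?_⟩
  · rwa [natDegree_comp, natDegree_X_add_C, mul_one]
  · rw [eval_comp, eval_add, eval_X, eval_C, hreval _ (pow_add_pow_succ_eq_of_line_root hq hF ht),
      hcoeff]

def hermitianLiftedCode (F : Type*) [Field F] (q : ℕ) :
    Submodule F (HermitianCurvePoints F q → F) :=
  Submodule.span F {v | ∃ f : MvPolynomial (Fin 2) F,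
    (∀ α β : F, ∃ g : Polynomial F, g.degree ≤ ((q - 1 : ℕ) : WithBot ℕ) ∧
      ∀ t : F, t ^ (q + 1) + α ^ q * t ^ q + α * t + (β + β ^ q) = 0 →
        MvPolynomial.eval ![α * t + β, t] f = g.eval t) ∧
    ∀ P, v P = MvPolynomial.eval ![P.1.1, P.1.2] f}

theorem sq_monomial_mem_hermitianLiftedCode (hq : q = 2 ^ l) (hF : Fintype.card F = q ^ 2)
    {a b c : ℕ} (hab : 2 * (a + b) < q) (hc : 2 * c < q) :
    (fun P : HermitianCurvePoints F q => P.1.1 ^ (2 * a) * P.1.2 ^ (2 * (b + q * c))) ∈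
      hermitianLiftedCode F q := by
  refine Submodule.subset_span ⟨.X 0 ^ (2 * a) * .X 1 ^ (2 * (b + q * c)), fun α β => ?_,
    fun P => by simp⟩
  simpa using exists_degree_le_eval_eq_line_sq_monomial hq hF hab hc α β

theorem two_mul_pow_three_le_finrank_hermitianLiftedCode {m : ℕ} (hq : q = 2 ^ l)
    (hF : Fintype.card F = q ^ 2) (hm : q = 4 * m) :
    2 * m ^ 3 ≤ Module.finrank F (hermitianLiftedCode F q) := by
  have hexp (b : Fin m) (c : Fin (2 * m)) : 2 * (b + q * c) < q ^ 2 := by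
    have := b.isLt
    have : q * (2 * c + 2) ≤ q * q := Nat.mul_le_mul_left q (by omega)
    nlinarith
  let e (x : Fin m × Fin m × Fin (2 * m)) : Fin q × Fin (q ^ 2) :=
    (⟨2 * x.1, by omega⟩, ⟨2 * (x.2.1 + q * x.2.2), hexp x.2.1 x.2.2⟩)
  have he : Function.Injective e := by
    rintro ⟨a, b, c⟩ ⟨a', b', c'⟩ h
    simp only [e, Prod.mk.injEq, Fin.mk.injEq] at h
    obtain ⟨ha, hbc⟩ := h
    have hbc' : (b : ℕ) + q * c = b' + q * c' := by omega
    have hb : (b : ℕ) = b' := by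
      simpa [Nat.add_mul_mod_self_left, Nat.mod_eq_of_lt (b.isLt.trans_le (by omega : m ≤ q)),
        Nat.mod_eq_of_lt (b'.isLt.trans_le (by omega : m ≤ q))] using congrArg (· % q) hbc'
    have hc : (c : ℕ) = c' := by
      rw [hb] at hbc'
      exact Nat.eq_of_mul_eq_mul_left (by omega) (Nat.add_left_cancel hbc')
    simp only [Prod.mk.injEq, Fin.ext_iff]
    omega
  have hmem (x : Fin m × Fin m × Fin (2 * m)) := sq_monomial_mem_hermitianLiftedCode (F := F) hq hF
    (a := x.1) (b := x.2.1) (c := x.2.2) (by omega) (by omega)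
  have hli : LinearIndependent F (fun x => (⟨_, hmem x⟩ : hermitianLiftedCode F q)) :=
    LinearIndependent.of_comp (hermitianLiftedCode F q).subtype
      ((linearIndependent_hermitian_monomial hq hF).comp e he)
  calc 2 * m ^ 3 = Fintype.card (Fin m × Fin m × Fin (2 * m)) := by simp; ring
    _ ≤ _ := hli.fintype_card_le_finrank

end CharTwo

/-- For `q = 2^l` with `l ≥ 2`, the rate of the Hermitian-lifted code `C_q`
(its `F_{q^2}`-dimension divided by its length `q^3`) is at least `0.007`. -/
theorem hermitian_lifted_code_rate_two (l q : ℕ) (hl : 2 ≤ l) (hq : q = 2 ^ l)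
    (F : Type*) [Field F] [Fintype F] (hF : Fintype.card F = q ^ 2) :
    (0.007 : ℝ) ≤
      (Module.finrank F (Submodule.span F
        {v : {pt : F × F // pt.1 ^ q + pt.1 + pt.2 ^ (q + 1) = 0} → F |
          ∃ f : MvPolynomial (Fin 2) F,
            (∀ α β : F, ∃ g : Polynomial F, g.degree ≤ ((q - 1 : ℕ) : WithBot ℕ) ∧
              ∀ t : F, t ^ (q + 1) + α ^ q * t ^ q + α * t + (β + β ^ q) = 0 →
                MvPolynomial.eval ![α * t + β, t] f = g.eval t) ∧
            ∀ P, v P = MvPolynomial.eval ![P.1.1, P.1.2] f}) : ℝ) / q ^ 3 := by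
  have : CharP F 2 := ringChar.of_eq <| FiniteField.even_card_iff_char_two.mpr <| by
    rw [hF, hq]
    exact Nat.mod_eq_zero_of_dvd (dvd_pow (dvd_pow_self 2 (by omega)) two_ne_zero)
  obtain ⟨m, hm⟩ : ∃ m, q = 4 * m := ⟨2 ^ (l - 2), by rw [hq, ← pow_sub_mul_pow 2 hl]; ring⟩
  have hdim : (2 * m ^ 3 : ℝ) ≤ Module.finrank F (hermitianLiftedCode F q) := by
    exact_mod_cast two_mul_pow_three_le_finrank_hermitianLiftedCode hq hF hm
  have hm0 : (0 : ℝ) < m := by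
    have : 0 < q := hq ▸ by positivity
    exact_mod_cast (by omega : 0 < m)
  have hqm : (q : ℝ) = 4 * m := by exact_mod_cast hm
  change (0.007 : ℝ) ≤ (Module.finrank F (hermitianLiftedCode F q) : ℝ) / q ^ 3
  rw [hqm, le_div_iff₀ (by positivity)]
  nlinarith [pow_pos hm0 3]
end
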